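/- arXiv:1909.03238 — 11 statements merged into one kernel-verified Lean document; each statement's English description precedes it below -/
import Mathlib

section
/- Let (A, m) be a σ-finite measure space, (Ω, P) a probability space, and G : A × Ω → ℝ a jointly measurable family of random variables such that for every t ∈ A the random variable G_t is centered Gaussian with standard deviation σ_t, where t ↦ σ_t is measurable. Set C = ∫_A σ_t m(dt). If C < ∞, then E exp(∫_A |G_t| m(dt)) ≤ e^{C²/2} · (2/√(2π)) ∫_{-∞}^{C} e^{-u²/2} du ≤ exp(√(2/π) C + C²/2). -/
/-!
Write `F ω = ∫ |G_t ω| dm(t)`. Minkowski's integral inequality in `Lⁿ(P)` together with the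
scaling `E|G_t|ⁿ = σ_tⁿ E|Y|ⁿ`, `Y` standard Gaussian, gives `E Fⁿ ≤ Cⁿ E|Y|ⁿ` for every `n`.
Summing the exponential series term by term, `E exp F ≤ E exp (C|Y|)`, and completing the square
in the Gaussian density evaluates the latter as `e^{C²/2} · 2Φ(C)`. Finally
`2Φ(C) ≤ 1 + √(2/π) C ≤ exp (√(2/π) C)`, since the standard density is at most `1/√(2π)`.
-/

open MeasureTheory ProbabilityTheory Real Set
open scoped NNReal ENNReal Nat

section Minkowski

variable {A : Type*} [MeasurableSpace A] (m : Measure A) [SigmaFinite m]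

lemma lintegral_pi_fin_prod_eq_pow {h : A → ℝ≥0∞} (hh : Measurable h) (n : ℕ) :
    ∫⁻ x : Fin n → A, ∏ i, h (x i) ∂(Measure.pi fun _ => m) = (∫⁻ t, h t ∂m) ^ n := by
  induction n with
  | zero => simp
  | succ n ih =>
    let e := MeasurableEquiv.piFinSuccAbove (fun _ : Fin (n + 1) => A) 0
    calc ∫⁻ x : Fin (n + 1) → A, ∏ i, h (x i) ∂(Measure.pi fun _ => m)
        = ∫⁻ x, (fun p : A × (Fin n → A) => h p.1 * ∏ j, h (p.2 j)) (e x)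
            ∂(Measure.pi fun _ => m) := by
          simp [e, Fin.prod_univ_succ, MeasurableEquiv.piFinSuccAbove_apply, Fin.tail]
      _ = ∫⁻ p : A × (Fin n → A), h p.1 * ∏ j, h (p.2 j) ∂(m.prod (Measure.pi fun _ => m)) :=
          (measurePreserving_piFinSuccAbove (fun _ : Fin (n + 1) => m) 0).lintegral_comp_emb
            e.measurableEmbedding fun p => h p.1 * ∏ j, h (p.2 j)
      _ = (∫⁻ t, h t ∂m) ^ (n + 1) := by
          rw [lintegral_prod_mul (g := fun y : Fin n → A => ∏ j, h (y j)) hh.aemeasurable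
            (Finset.measurable_prod _ fun j _ => hh.comp (measurable_pi_apply j)).aemeasurable,
            ih, pow_succ']

/-- Minkowski's integral inequality in `Lⁿ`: expand the `n`-th power as an integral over `Aⁿ` and
apply Hölder's inequality to the product of the `n` factors. -/
lemma lintegral_pow_lintegral_le {Ω : Type*} [MeasurableSpace Ω] (P : Measure Ω) [SFinite P]
    {f : A → Ω → ℝ≥0∞} (hf : Measurable (Function.uncurry f)) {n : ℕ} (hn : n ≠ 0) :
    ∫⁻ ω, (∫⁻ t, f t ω ∂m) ^ n ∂P ≤ (∫⁻ t, (∫⁻ ω, f t ω ^ n ∂P) ^ (n⁻¹ : ℝ) ∂m) ^ n := by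
  have hHolder (x : Fin n → A) :
      ∫⁻ ω, ∏ i, f (x i) ω ∂P ≤ ∏ i, (∫⁻ ω, f (x i) ω ^ n ∂P) ^ (n⁻¹ : ℝ) := by
    simpa [ENNReal.pow_rpow_inv_natCast hn] using
      ENNReal.lintegral_prod_norm_pow_le (μ := P) Finset.univ (p := fun _ => (n⁻¹ : ℝ))
        (fun i _ => (hf.comp measurable_prodMk_left).pow_const n |>.aemeasurable)
        (by simp [hn]) (fun _ _ => by positivity)
  calc ∫⁻ ω, (∫⁻ t, f t ω ∂m) ^ n ∂P
      = ∫⁻ ω, ∫⁻ x : Fin n → A, ∏ i, f (x i) ω ∂(Measure.pi fun _ => m) ∂P := by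
        refine lintegral_congr fun ω => ?_
        rw [lintegral_pi_fin_prod_eq_pow m (h := fun t => f t ω) (hf.comp measurable_prodMk_right)]
    _ = ∫⁻ x : Fin n → A, ∫⁻ ω, ∏ i, f (x i) ω ∂P ∂(Measure.pi fun _ => m) :=
        lintegral_lintegral_swap (by fun_prop)
    _ ≤ ∫⁻ x : Fin n → A, ∏ i, (∫⁻ ω, f (x i) ω ^ n ∂P) ^ (n⁻¹ : ℝ) ∂(Measure.pi fun _ => m) :=
        lintegral_mono hHolder
    _ = (∫⁻ t, (∫⁻ ω, f t ω ^ n ∂P) ^ (n⁻¹ : ℝ) ∂m) ^ n :=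
        lintegral_pi_fin_prod_eq_pow m (((hf.pow_const n).lintegral_prod_right').pow_const _) n

end Minkowski

lemma lintegral_enorm_pow_gaussianReal (σ : ℝ≥0) (n : ℕ) :
    ∫⁻ y, ‖y‖ₑ ^ n ∂gaussianReal 0 (σ ^ 2) = σ ^ n * ∫⁻ y, ‖y‖ₑ ^ n ∂gaussianReal 0 1 := by
  have hscale : (gaussianReal 0 1).map ((σ : ℝ) * ·) = gaussianReal 0 (σ ^ 2) := by
    rw [gaussianReal_map_const_mul]
    congr 1
    · simp
    · ext; simp
  rw [← hscale, lintegral_map (by fun_prop) (by fun_prop), ← lintegral_const_mul' _ _ (by simp)]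
  simp [enorm_mul, mul_pow]

lemma lintegral_pow_lintegral_enorm_le_of_map_eq_gaussianReal
    {A : Type*} [MeasurableSpace A] (m : Measure A) [SigmaFinite m]
    {Ω : Type*} [MeasurableSpace Ω] (P : Measure Ω) [IsProbabilityMeasure P]
    {G : A → Ω → ℝ} (hG : Measurable (Function.uncurry G)) {σ : A → ℝ≥0} (hσ : Measurable σ)
    (hGauss : ∀ t, P.map (G t) = gaussianReal 0 (σ t ^ 2)) (n : ℕ) :
    ∫⁻ ω, (∫⁻ t, ‖G t ω‖ₑ ∂m) ^ n ∂P
      ≤ (∫⁻ t, σ t ∂m) ^ n * ∫⁻ y, ‖y‖ₑ ^ n ∂gaussianReal 0 1 := by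
  rcases eq_or_ne n 0 with rfl | hn
  · simp
  have hnorm (t : A) : (∫⁻ ω, ‖G t ω‖ₑ ^ n ∂P) ^ (n⁻¹ : ℝ)
      = σ t * (∫⁻ y, ‖y‖ₑ ^ n ∂gaussianReal 0 1) ^ (n⁻¹ : ℝ) := by
    have hGt : Measurable (G t) := hG.comp measurable_prodMk_left
    rw [← lintegral_map (f := fun y => ‖y‖ₑ ^ n) (by fun_prop) hGt, hGauss,
      lintegral_enorm_pow_gaussianReal, ENNReal.mul_rpow_of_nonneg _ _ (by positivity),
      ENNReal.pow_rpow_inv_natCast hn]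
  calc ∫⁻ ω, (∫⁻ t, ‖G t ω‖ₑ ∂m) ^ n ∂P
      ≤ (∫⁻ t, (∫⁻ ω, ‖G t ω‖ₑ ^ n ∂P) ^ (n⁻¹ : ℝ) ∂m) ^ n :=
        lintegral_pow_lintegral_le m P (f := fun t ω => ‖G t ω‖ₑ) hG.enorm hn
    _ = (∫⁻ t, σ t ∂m) ^ n * ∫⁻ y, ‖y‖ₑ ^ n ∂gaussianReal 0 1 := by
        simp_rw [hnorm]
        rw [lintegral_mul_const _ hσ.coe_nnreal_ennreal, mul_pow, ENNReal.rpow_inv_natCast_pow hn]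

lemma ENNReal.ofReal_exp_eq_tsum {x : ℝ} (hx : 0 ≤ x) :
    ENNReal.ofReal (exp x) = ∑' n : ℕ, (n ! : ℝ≥0∞)⁻¹ * ENNReal.ofReal x ^ n := by
  rw [exp_eq_exp_ℝ, NormedSpace.exp_eq_tsum_div,
    ENNReal.ofReal_tsum_of_nonneg (fun n => by positivity) (Real.summable_pow_div_factorial x)]
  refine tsum_congr fun n => ?_
  rw [ENNReal.ofReal_div_of_pos (by positivity), ENNReal.ofReal_pow hx, ENNReal.ofReal_natCast,
    ENNReal.div_eq_inv_mul]

lemma ENNReal.ofReal_exp_toReal_le_tsum (b : ℝ≥0∞) :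
    ENNReal.ofReal (exp b.toReal) ≤ ∑' n : ℕ, (n ! : ℝ≥0∞)⁻¹ * b ^ n := by
  rw [ENNReal.ofReal_exp_eq_tsum ENNReal.toReal_nonneg]
  gcongr
  exact ENNReal.ofReal_toReal_le

lemma lintegral_ofReal_exp_le_of_moments_le {Ω Ω' : Type*} [MeasurableSpace Ω]
    [MeasurableSpace Ω'] {P : Measure Ω} {Q : Measure Ω'} {F : Ω → ℝ≥0∞} (hF : Measurable F)
    {H : Ω' → ℝ} (hH : Measurable H) (hH0 : ∀ y, 0 ≤ H y)
    (hmom : ∀ n : ℕ, ∫⁻ ω, F ω ^ n ∂P ≤ ∫⁻ y, ENNReal.ofReal (H y) ^ n ∂Q) :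
    ∫⁻ ω, ENNReal.ofReal (exp (F ω).toReal) ∂P ≤ ∫⁻ y, ENNReal.ofReal (exp (H y)) ∂Q := by
  calc ∫⁻ ω, ENNReal.ofReal (exp (F ω).toReal) ∂P
      ≤ ∫⁻ ω, ∑' n : ℕ, (n ! : ℝ≥0∞)⁻¹ * F ω ^ n ∂P :=
        lintegral_mono fun ω => ENNReal.ofReal_exp_toReal_le_tsum _
    _ = ∑' n : ℕ, (n ! : ℝ≥0∞)⁻¹ * ∫⁻ ω, F ω ^ n ∂P := by
        rw [lintegral_tsum fun n => ((hF.pow_const n).const_mul _).aemeasurable]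
        simp_rw [lintegral_const_mul _ (hF.pow_const _)]
    _ ≤ ∑' n : ℕ, (n ! : ℝ≥0∞)⁻¹ * ∫⁻ y, ENNReal.ofReal (H y) ^ n ∂Q := by
        gcongr with n
        exact hmom n
    _ = ∫⁻ y, ENNReal.ofReal (exp (H y)) ∂Q := by
        simp_rw [ENNReal.ofReal_exp_eq_tsum (hH0 _),
          ← lintegral_const_mul _ (hH.ennreal_ofReal.pow_const _)]
        rw [lintegral_tsum fun n => ((hH.ennreal_ofReal.pow_const n).const_mul _).aemeasurable]

lemma integrable_exp_mul_abs_gaussianReal (μ : ℝ) (v : ℝ≥0) (c : ℝ) :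
    Integrable (fun y => exp (c * |y|)) (gaussianReal μ v) := by
  refine ((integrable_exp_mul_gaussianReal c).add (integrable_exp_mul_gaussianReal (-c))).mono'
    (by fun_prop) (ae_of_all _ fun y => ?_)
  rw [norm_of_nonneg (exp_nonneg _)]
  simp only [Pi.add_apply]
  rcases abs_cases y with ⟨hy, -⟩ | ⟨hy, -⟩ <;> rw [hy]
  · linarith [exp_nonneg (-c * y)]
  · rw [mul_neg, ← neg_mul]
    linarith [exp_nonneg (c * y)]

lemma gaussianPDFReal_mul_exp_mul (c y : ℝ) :
    gaussianPDFReal 0 1 y * exp (c * y) = exp (c ^ 2 / 2) / √(2 * π) * exp (-(c - y) ^ 2 / 2) := by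
  simp only [gaussianPDFReal, NNReal.coe_one, mul_one, sub_zero]
  rw [mul_assoc, ← exp_add, inv_mul_eq_div, div_mul_eq_mul_div, ← exp_add]
  congr 2
  ring

lemma integral_Ioi_zero_exp_neg_sub_sq (c : ℝ) :
    ∫ y in Ioi 0, exp (-(c - y) ^ 2 / 2) = ∫ u in Iic c, exp (-u ^ 2 / 2) := by
  have h := (Measure.measurePreserving_sub_left volume c).setIntegral_preimage_emb
    (measurableEmbedding_subLeft c) (fun u => exp (-u ^ 2 / 2)) (Iio c)
  rw [integral_Iic_eq_integral_Iio, ← h]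
  congr 1
  ext y; simp

lemma integral_exp_mul_abs_gaussianReal (c : ℝ) :
    ∫ y, exp (c * |y|) ∂gaussianReal 0 1
      = exp (c ^ 2 / 2) * (2 / √(2 * π)) * ∫ u in Iic c, exp (-u ^ 2 / 2) := by
  have hpdf_abs (y : ℝ) : gaussianPDFReal 0 1 |y| = gaussianPDFReal 0 1 y := by
    simp [gaussianPDFReal]
  calc ∫ y, exp (c * |y|) ∂gaussianReal 0 1
      = ∫ y, (fun u => gaussianPDFReal 0 1 u * exp (c * u)) |y| := by
        simp [integral_gaussianReal_eq_integral_smul, hpdf_abs]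
    _ = 2 * ∫ y in Ioi 0, exp (c ^ 2 / 2) / √(2 * π) * exp (-(c - y) ^ 2 / 2) := by
        rw [integral_comp_abs (f := fun u => gaussianPDFReal 0 1 u * exp (c * u))]
        simp only [gaussianPDFReal_mul_exp_mul]
    _ = exp (c ^ 2 / 2) * (2 / √(2 * π)) * ∫ u in Iic c, exp (-u ^ 2 / 2) := by
        rw [integral_const_mul, integral_Ioi_zero_exp_neg_sub_sq]
        ring

lemma two_div_sqrt_two_pi_mul_integral_Iic_le {c : ℝ} (hc : 0 ≤ c) :
    2 / √(2 * π) * ∫ u in Iic c, exp (-u ^ 2 / 2) ≤ 1 + √(2 / π) * c := by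
  have hint : Integrable fun u : ℝ => exp (-u ^ 2 / 2) := by
    simpa [neg_div, div_eq_inv_mul] using integrable_exp_neg_mul_sq (b := 1 / 2) (by norm_num)
  have hIic : ∫ u in Iic (0 : ℝ), exp (-u ^ 2 / 2) = √(2 * π) / 2 := by
    rw [← neg_zero, ← integral_comp_neg_Ioi]
    simpa [neg_div, div_eq_inv_mul, div_inv_eq_mul, mul_comm] using integral_gaussian_Ioi (1 / 2)
  have hIoc : ∫ u in Ioc 0 c, exp (-u ^ 2 / 2) ≤ c := by
    refine (le_norm_self _).trans ((norm_setIntegral_le_of_norm_le_const (C := 1) measure_Ioc_lt_top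
      fun u _ => ?_).trans_eq ?_)
    · rw [norm_of_nonneg (exp_nonneg _), exp_le_one_iff]
      nlinarith [sq_nonneg u]
    · simp [hc]
  have hsqrt : 2 / √(2 * π) = √(2 / π) := by
    rw [div_eq_iff (by positivity), ← sqrt_mul (by positivity),
      show 2 / π * (2 * π) = 2 ^ 2 by field_simp, sqrt_sq zero_le_two]
  rw [← Iic_union_Ioc_eq_Iic hc, setIntegral_union (Iic_disjoint_Ioc le_rfl) measurableSet_Ioc
    hint.integrableOn hint.integrableOn, hIic, ← hsqrt]
  calc 2 / √(2 * π) * (√(2 * π) / 2 + ∫ u in Ioc 0 c, exp (-u ^ 2 / 2))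
      ≤ 2 / √(2 * π) * (√(2 * π) / 2 + c) := by gcongr
    _ = 1 + 2 / √(2 * π) * c := by field_simp

lemma exp_sq_div_two_mul_integral_Iic_le {c : ℝ} (hc : 0 ≤ c) :
    exp (c ^ 2 / 2) * (2 / √(2 * π)) * (∫ u in Iic c, exp (-u ^ 2 / 2))
      ≤ exp (√(2 / π) * c + c ^ 2 / 2) :=
  calc exp (c ^ 2 / 2) * (2 / √(2 * π)) * (∫ u in Iic c, exp (-u ^ 2 / 2))
      ≤ exp (c ^ 2 / 2) * (1 + √(2 / π) * c) := by
        rw [mul_assoc]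
        gcongr
        exact two_div_sqrt_two_pi_mul_integral_Iic_le hc
    _ ≤ exp (c ^ 2 / 2) * exp (√(2 / π) * c) := by
        gcongr
        linarith [add_one_le_exp (√(2 / π) * c)]
    _ = exp (√(2 / π) * c + c ^ 2 / 2) := by rw [← exp_add, add_comm]

/-- Let `(A, m)` be a σ-finite measure space, `(Ω, P)` a probability space,
and `G : A × Ω → ℝ` a jointly measurable family of random variables such that for every `t ∈ A`
the random variable `G t` is centered Gaussian with standard deviation `σ t`, where `σ` is
measurable.  Set `C = ∫_A σ_t m(dt)`.  If `C < ∞` (i.e. `σ` is integrable), then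
`E exp (∫_A |G_t| m(dt)) ≤ e^{C²/2} ⬝ (2/√(2π)) ∫_{-∞}^C e^{-u²/2} du
  ≤ exp (√(2/π) C + C²/2)`. -/
theorem stmt0
    {A : Type*} [MeasurableSpace A] (m : Measure A) [SigmaFinite m]
    {Ω : Type*} [MeasurableSpace Ω] (P : Measure Ω) [IsProbabilityMeasure P]
    (G : A → Ω → ℝ) (hG : Measurable (Function.uncurry G))
    (σ : A → ℝ≥0) (hσ : Measurable σ)
    (hGauss : ∀ t, P.map (G t) = gaussianReal 0 (σ t ^ 2))
    (hint : Integrable (fun t => (σ t : ℝ)) m)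
    (C : ℝ) (hC : C = ∫ t, (σ t : ℝ) ∂m) :
    (∫⁻ ω, ENNReal.ofReal (Real.exp (∫ t, |G t ω| ∂m)) ∂P)
      ≤ ENNReal.ofReal (Real.exp (C ^ 2 / 2) * (2 / Real.sqrt (2 * π)) *
          ∫ u in Set.Iic C, Real.exp (-u ^ 2 / 2)) ∧
    Real.exp (C ^ 2 / 2) * (2 / Real.sqrt (2 * π)) * (∫ u in Set.Iic C, Real.exp (-u ^ 2 / 2))
      ≤ Real.exp (Real.sqrt (2 / π) * C + C ^ 2 / 2) := by
  have hC0 : 0 ≤ C := hC ▸ integral_nonneg fun t => (σ t).2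
  have hmass : ∫⁻ t, (σ t : ℝ≥0∞) ∂m = ENNReal.ofReal C := by
    rw [hC, ofReal_integral_eq_lintegral_ofReal hint (ae_of_all _ fun t => (σ t).2)]
    simp
  refine ⟨?_, exp_sq_div_two_mul_integral_Iic_le hC0⟩
  calc ∫⁻ ω, ENNReal.ofReal (exp (∫ t, |G t ω| ∂m)) ∂P
      = ∫⁻ ω, ENNReal.ofReal (exp (∫⁻ t, ‖G t ω‖ₑ ∂m).toReal) ∂P := by
        refine lintegral_congr fun ω => ?_
        have hGω : Measurable fun t => G t ω := hG.comp measurable_prodMk_right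
        rw [← integral_norm_eq_lintegral_enorm hGω.aestronglyMeasurable]
        simp only [Real.norm_eq_abs]
    _ ≤ ∫⁻ y, ENNReal.ofReal (exp (C * |y|)) ∂gaussianReal 0 1 := by
        refine lintegral_ofReal_exp_le_of_moments_le hG.enorm.lintegral_prod_left (by fun_prop)
          (fun y => by positivity) fun n => ?_
        have hpow (y : ℝ) : ENNReal.ofReal (C * |y|) ^ n = ENNReal.ofReal C ^ n * ‖y‖ₑ ^ n := by
          rw [ENNReal.ofReal_mul hC0, mul_pow, Real.enorm_eq_ofReal_abs]
        rw [lintegral_congr hpow, lintegral_const_mul _ (by fun_prop), ← hmass]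
        exact lintegral_pow_lintegral_enorm_le_of_map_eq_gaussianReal m P hG hσ hGauss n
    _ = ENNReal.ofReal (exp (C ^ 2 / 2) * (2 / √(2 * π)) * ∫ u in Iic C, exp (-u ^ 2 / 2)) := by
        rw [← ofReal_integral_eq_lintegral_ofReal (integrable_exp_mul_abs_gaussianReal 0 1 C)
          (ae_of_all _ fun _ => exp_nonneg _), integral_exp_mul_abs_gaussianReal]
end

section
/- Let (A, m) be a σ-finite measure space, (Ω, P) a probability space, δ ∈ (0,2), and G : A × Ω → ℝ a jointly measurable family of random variables such that for every t ∈ A the random variable G_t is centered Gaussian with standard deviation σ_t, where t ↦ σ_t is measurable. Set C = ∫_A σ_t^δ m(dt). If C < ∞, then E exp(∫_A |G_t|^δ m(dt)) ≤ ∫_ℝ exp(C|u|^δ) γ_ℝ(du). -/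
/-!
Assume `C > 0` and normalise `σ_t^δ m(dt)` into the probability measure `ν(dt) = σ_t^δ m(dt) / C`.
Then `∫_A |G_t|^δ dm = ∫_A C |G_t / σ_t|^δ dν`, so Jensen's inequality for `exp` gives
`exp (∫_A |G_t|^δ dm) ≤ ∫_A exp (C |G_t / σ_t|^δ) dν`. Take expectations and exchange the
integrals (Tonelli): for `ν`-almost every `t` the variable `G_t / σ_t` is standard Gaussian, so the
inner expectation is the right-hand side, and `ν` has mass one.

The identity `∫_A |G_t|^δ dm = ∫_A C |G_t / σ_t|^δ dν` ignores the set `{σ = 0}`: there `G_t = 0`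
almost surely for each `t`, hence, by Fubini, for almost every `ω` it vanishes `m`-almost
everywhere on `{σ = 0}`. The same fact makes the left-hand side equal to `1` when `C = 0`.
-/

open MeasureTheory ProbabilityTheory Real
open scoped NNReal ENNReal

lemma rpow_div_mul_mul_abs_div_rpow {δ C s x : ℝ} (hδ : δ ≠ 0) (hC : C ≠ 0) (hs : 0 ≤ s)
    (hx : s = 0 → x = 0) : s ^ δ / C * (C * |x / s| ^ δ) = |x| ^ δ := by
  rcases hs.eq_or_lt with rfl | hs
  · simp [hx rfl, zero_rpow hδ]
  · rw [abs_div, abs_of_pos hs, div_rpow (abs_nonneg x) hs.le]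
    field_simp

section Jensen

variable {α : Type*} [MeasurableSpace α]

lemma ofReal_exp_integral_le_lintegral (μ : Measure α) [IsProbabilityMeasure μ] {f : α → ℝ}
    (hf0 : 0 ≤ᵐ[μ] f) (hf : AEStronglyMeasurable f μ) :
    ENNReal.ofReal (exp (∫ x, f x ∂μ)) ≤ ∫⁻ x, ENNReal.ofReal (exp (f x)) ∂μ := by
  rcases eq_top_or_lt_top (∫⁻ x, ENNReal.ofReal (exp (f x)) ∂μ) with htop | hfin
  · exact htop ▸ le_top
  have hexp_nonneg : 0 ≤ᵐ[μ] fun x => exp (f x) := ae_of_all _ fun x => (exp_pos _).le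
  have hexp : Integrable (fun x => exp (f x)) μ :=
    ⟨continuous_exp.comp_aestronglyMeasurable hf,
      (hasFiniteIntegral_iff_ofReal hexp_nonneg).2 hfin⟩
  have hfint : Integrable f μ := hexp.mono' hf <| by
    filter_upwards [hf0] with x hx
    rw [Real.norm_of_nonneg hx]
    linarith [add_one_le_exp (f x)]
  calc ENNReal.ofReal (exp (∫ x, f x ∂μ))
      ≤ ENNReal.ofReal (∫ x, exp (f x) ∂μ) := ENNReal.ofReal_le_ofReal <|
        convexOn_exp.map_integral_le continuous_exp.continuousOn isClosed_univ
          (ae_of_all _ fun _ => Set.mem_univ _) hfint hexp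
    _ = ∫⁻ x, ENNReal.ofReal (exp (f x)) ∂μ := ofReal_integral_eq_lintegral_ofReal hexp hexp_nonneg

end Jensen

section Gaussian

variable {Ω : Type*} [MeasurableSpace Ω] {P : Measure Ω} {X : Ω → ℝ}

lemma ae_eq_zero_of_map_eq_gaussianReal_zero (hX : AEMeasurable X P)
    (h : P.map X = gaussianReal 0 0) : X =ᵐ[P] 0 :=
  ae_of_ae_map (p := fun x => x = 0) hX <| by simp [h, gaussianReal_zero_var, ae_dirac_eq]

lemma map_div_eq_gaussianReal_of_map_eq {s : ℝ≥0} (hX : AEMeasurable X P)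
    (h : P.map X = gaussianReal 0 (s ^ 2)) (hs : s ≠ 0) :
    P.map (fun ω => X ω / s) = gaussianReal 0 1 := by
  have : (fun ω => X ω / s) = (fun x => (s : ℝ)⁻¹ * x) ∘ X := by
    ext; simp [div_eq_inv_mul]
  rw [this, ← AEMeasurable.map_map_of_aemeasurable (by fun_prop) hX, h, gaussianReal_map_const_mul]
  congr 1
  · simp
  · ext; simp [hs]

lemma lintegral_comp_div_of_map_eq_gaussianReal {s : ℝ≥0} (hX : AEMeasurable X P)
    (h : P.map X = gaussianReal 0 (s ^ 2)) (hs : s ≠ 0) {φ : ℝ → ℝ≥0∞} (hφ : Measurable φ) :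
    ∫⁻ ω, φ (X ω / s) ∂P = ∫⁻ u, φ u ∂gaussianReal 0 1 := by
  rw [← map_div_eq_gaussianReal_of_map_eq hX h hs, lintegral_map' hφ.aemeasurable (by fun_prop)]

end Gaussian

section Weighted

variable {A : Type*} [MeasurableSpace A] {m : Measure A}

lemma isProbabilityMeasure_withDensity_ofReal_div_integral {w : A → ℝ} (hw0 : 0 ≤ w)
    (hne : ∫ t, w t ∂m ≠ 0) :
    IsProbabilityMeasure (m.withDensity fun t => ENNReal.ofReal (w t / ∫ t, w t ∂m)) := by
  constructor
  rw [withDensity_apply _ MeasurableSet.univ, Measure.restrict_univ,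
    ← ofReal_integral_eq_lintegral_ofReal ((Integrable.of_integral_ne_zero hne).div_const _)
      (ae_of_all _ fun t => div_nonneg (hw0 t) (integral_nonneg hw0)),
    integral_div, div_self hne, ENNReal.ofReal_one]

lemma ofReal_exp_integral_le_lintegral_withDensity {w f g : A → ℝ} (hw0 : 0 ≤ w)
    (hw : Measurable w) [IsProbabilityMeasure (m.withDensity fun t => ENNReal.ofReal (w t))]
    (hf0 : 0 ≤ f) (hf : Measurable f) (hfg : ∀ᵐ t ∂m, w t * f t = g t) :
    ENNReal.ofReal (exp (∫ t, g t ∂m))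
      ≤ ∫⁻ t, ENNReal.ofReal (exp (f t)) ∂m.withDensity fun t => ENNReal.ofReal (w t) := by
  have hg : ∫ t, g t ∂m = ∫ t, f t ∂m.withDensity fun t => ENNReal.ofReal (w t) := by
    rw [integral_withDensity_eq_integral_toReal_smul (by fun_prop)
      (ae_of_all _ fun _ => ENNReal.ofReal_lt_top)]
    refine integral_congr_ae ?_
    filter_upwards [hfg] with t ht
    simp [ENNReal.toReal_ofReal (hw0 t), ht]
  rw [hg]
  exact ofReal_exp_integral_le_lintegral _ (ae_of_all _ hf0) hf.aestronglyMeasurable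

end Weighted

lemma lintegral_ofReal_exp_integral_eq_one {A : Type*} [MeasurableSpace A] {m : Measure A}
    {Ω : Type*} [MeasurableSpace Ω] {P : Measure Ω} [IsProbabilityMeasure P] {g : A → Ω → ℝ}
    (hg : ∀ᵐ ω ∂P, (g · ω) =ᵐ[m] 0) :
    ∫⁻ ω, ENNReal.ofReal (exp (∫ t, g t ω ∂m)) ∂P = 1 := by
  rw [lintegral_congr_ae (g := fun _ => 1)]
  · simp
  filter_upwards [hg] with ω hω
  simp [integral_eq_zero_of_ae hω]

section GaussianFamily

variable {A : Type*} [MeasurableSpace A] {m : Measure A} {Ω : Type*} [MeasurableSpace Ω]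
  {P : Measure Ω} {G : A → Ω → ℝ} {σ : A → ℝ≥0}

lemma ae_ae_eq_zero_of_map_eq_gaussianReal [SFinite m] [SFinite P]
    (hG : Measurable (Function.uncurry G)) (hσ : Measurable σ)
    (hGauss : ∀ t, P.map (G t) = gaussianReal 0 (σ t ^ 2)) :
    ∀ᵐ ω ∂P, ∀ᵐ t ∂m, σ t = 0 → G t ω = 0 := by
  have hmeas : MeasurableSet {z : A × Ω | σ z.1 = 0 → G z.1 z.2 = 0} :=
    ((measurableSet_singleton 0).preimage (hσ.comp measurable_fst)).compl.union
      ((measurableSet_singleton 0).preimage hG) |>.congr (by ext ⟨t, ω⟩; simp [imp_iff_not_or])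
  rw [← Measure.ae_ae_comm hmeas]
  refine ae_of_all _ fun t => ?_
  by_cases ht : σ t = 0
  · have hGt : Measurable (G t) := hG.comp measurable_prodMk_left
    filter_upwards [ae_eq_zero_of_map_eq_gaussianReal_zero hGt.aemeasurable
      (by simpa [ht] using hGauss t)] with ω hω using fun _ => hω
  · exact ae_of_all _ fun ω h => absurd h ht

lemma lintegral_ofReal_exp_integral_rpow_abs_le [IsProbabilityMeasure P] {δ : ℝ} (hδ : δ ≠ 0)
    (hG : Measurable (Function.uncurry G)) (hσ : Measurable σ)
    (hGauss : ∀ t, P.map (G t) = gaussianReal 0 (σ t ^ 2))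
    (hvanish : ∀ᵐ ω ∂P, ∀ᵐ t ∂m, σ t = 0 → G t ω = 0) (hC : 0 < ∫ t, (σ t : ℝ) ^ δ ∂m) :
    ∫⁻ ω, ENNReal.ofReal (exp (∫ t, |G t ω| ^ δ ∂m)) ∂P
      ≤ ∫⁻ u, ENNReal.ofReal (exp ((∫ t, (σ t : ℝ) ^ δ ∂m) * |u| ^ δ)) ∂gaussianReal 0 1 := by
  set C := ∫ t, (σ t : ℝ) ^ δ ∂m
  set ν := m.withDensity fun t => ENNReal.ofReal ((σ t : ℝ) ^ δ / C)
  have : IsProbabilityMeasure ν := isProbabilityMeasure_withDensity_ofReal_div_integral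
    (fun t => rpow_nonneg (σ t).coe_nonneg δ) hC.ne'
  set φ : ℝ → ℝ≥0∞ := fun u => ENNReal.ofReal (exp (C * |u| ^ δ))
  have hφ : Measurable φ := by fun_prop
  have hG' : Measurable fun z : Ω × A => G z.2 z.1 := hG.comp measurable_swap
  calc ∫⁻ ω, ENNReal.ofReal (exp (∫ t, |G t ω| ^ δ ∂m)) ∂P
      ≤ ∫⁻ ω, ∫⁻ t, φ (G t ω / σ t) ∂ν ∂P := lintegral_mono_ae <| by
        filter_upwards [hvanish] with ω hω
        refine ofReal_exp_integral_le_lintegral_withDensity (fun t => by positivity) (by fun_prop)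
          (fun t => by positivity) (by fun_prop) ?_
        filter_upwards [hω] with t ht
        exact rpow_div_mul_mul_abs_div_rpow hδ hC.ne' (σ t).coe_nonneg
          fun h => ht (by exact_mod_cast h)
    _ = ∫⁻ t, ∫⁻ ω, φ (G t ω / σ t) ∂P ∂ν := lintegral_lintegral_swap (by fun_prop)
    _ = ∫⁻ _, ∫⁻ u, φ u ∂gaussianReal 0 1 ∂ν := lintegral_congr_ae <| by
        refine (ae_withDensity_iff (by fun_prop)).2 (ae_of_all _ fun t ht => ?_)
        refine lintegral_comp_div_of_map_eq_gaussianReal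
          (hG.comp measurable_prodMk_left).aemeasurable (hGauss t) (fun h => ht ?_) hφ
        simp [h, hδ]
    _ = _ := by simp

end GaussianFamily

/-- Let `(A, m)` be a σ-finite measure space, `(Ω, P)` a probability space,
`δ ∈ (0,2)`, and `G` a jointly measurable family of random variables such that each `G t`
is centered Gaussian with standard deviation `σ t`, `σ` measurable.
Set `C = ∫_A σ_t^δ m(dt)`.  If `C < ∞` (i.e. `σ^δ` is integrable), then
`E exp (∫_A |G_t|^δ m(dt)) ≤ ∫_ℝ exp (C |u|^δ) γ_ℝ(du)`. -/
theorem stmt1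
    {A : Type*} [MeasurableSpace A] (m : Measure A) [SigmaFinite m]
    {Ω : Type*} [MeasurableSpace Ω] (P : Measure Ω) [IsProbabilityMeasure P]
    (δ : ℝ) (hδ : δ ∈ Set.Ioo (0 : ℝ) 2)
    (G : A → Ω → ℝ) (hG : Measurable (Function.uncurry G))
    (σ : A → ℝ≥0) (hσ : Measurable σ)
    (hGauss : ∀ t, P.map (G t) = gaussianReal 0 (σ t ^ 2))
    (hint : Integrable (fun t => (σ t : ℝ) ^ δ) m)
    (C : ℝ) (hC : C = ∫ t, (σ t : ℝ) ^ δ ∂m) :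
    (∫⁻ ω, ENNReal.ofReal (Real.exp (∫ t, |G t ω| ^ δ ∂m)) ∂P)
      ≤ ∫⁻ u, ENNReal.ofReal (Real.exp (C * |u| ^ δ)) ∂(gaussianReal 0 1) := by
  have hδ0 : δ ≠ 0 := hδ.1.ne'
  have hvanish := ae_ae_eq_zero_of_map_eq_gaussianReal (m := m) hG hσ hGauss
  have hσδ : ∀ t, 0 ≤ (σ t : ℝ) ^ δ := fun t => rpow_nonneg (σ t).coe_nonneg δ
  rcases (hC ▸ integral_nonneg hσδ : 0 ≤ C).eq_or_lt with hC0 | hCpos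
  · have hσ0 : ∀ᵐ t ∂m, σ t = 0 := by
      filter_upwards [(integral_eq_zero_iff_of_nonneg hσδ hint).1 (hC ▸ hC0.symm)] with t ht
      simpa [hδ0] using ht
    refine (lintegral_ofReal_exp_integral_eq_one ?_).trans_le ?_
    · filter_upwards [hvanish] with ω hω
      filter_upwards [hω, hσ0] with t h1 h2
      simp [h1 h2, hδ0]
    · simp [← hC0]
  · subst hC
    exact lintegral_ofReal_exp_integral_rpow_abs_le hδ0 hG hσ hGauss hvanish hCpos
end

section
/- Let p ≥ 1 and let f, g : (0,∞) → (0,∞) be decreasing functions. Then for every a ∈ ℝ^p, ∫_{ℝ^p} f(|x+a|) g(|x|) dx ≤ ∫_{ℝ^p} f(|x|) g(|x|) dx, where both integrals are taken in [0, ∞] with respect to Lebesgue measure on ℝ^p. -/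
open MeasureTheory Set
open scoped ENNReal

/-!
Extending `f` and `g` by `∞` on `(-∞, 0]` changes the integrands only on the null set `{0, -a}`
and makes both radial profiles antitone on all of `ℝ`. Writing `F x * G x` as the area of
`(0, F x) × (0, G x)` and using Tonelli, each integral becomes an integral over levels `(s, t)` of
the measure of `A ∩ B`, with `A`, `B` superlevel sets of `F`, `G`. For radial antitone functions
these are centred balls (open or closed), hence nested, while translating `A` preserves its
measure; so `μ (A' ∩ B) ≤ min (μ A) (μ B) = μ (A ∩ B)` for the translate `A'` of `A`.
-/

lemma volume_Ioi_inter_ofReal_lt (c : ℝ≥0∞) :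
    volume (Ioi (0 : ℝ) ∩ {s | ENNReal.ofReal s < c}) = c := by
  rcases eq_or_ne c ∞ with rfl | hc
  · simp
  · have hset : Ioi (0 : ℝ) ∩ {s | ENNReal.ofReal s < c} = Ioo 0 c.toReal := by
      ext s
      simp only [mem_inter_iff, mem_Ioi, mem_ofPred_eq, mem_Ioo, and_congr_right_iff]
      exact fun hs => ENNReal.ofReal_lt_iff_lt_toReal hs.le hc
    rw [hset, Real.volume_Ioo, sub_zero, ENNReal.ofReal_toReal hc]

theorem lintegral_mul_eq_lintegral_measure_inter_superlevel {α : Type*} [MeasurableSpace α]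
    (μ : Measure α) [SFinite μ] {F G : α → ℝ≥0∞} (hF : Measurable F) (hG : Measurable G) :
    ∫⁻ x, F x * G x ∂μ = ∫⁻ st in Ioi (0 : ℝ) ×ˢ Ioi (0 : ℝ),
      μ ({x | ENNReal.ofReal st.1 < F x} ∩ {x | ENNReal.ofReal st.2 < G x}) := by
  set E : Set (α × (ℝ × ℝ)) :=
    {q | ENNReal.ofReal q.2.1 < F q.1 ∧ ENNReal.ofReal q.2.2 < G q.1}
  have hE : MeasurableSet E :=
    (measurableSet_lt (ENNReal.measurable_ofReal.comp measurable_snd.fst)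
      (hF.comp measurable_fst)).inter
    (measurableSet_lt (ENNReal.measurable_ofReal.comp measurable_snd.snd)
      (hG.comp measurable_fst))
  have hslice (x : α) :
      volume.restrict (Ioi (0 : ℝ) ×ˢ Ioi (0 : ℝ)) (Prod.mk x ⁻¹' E) = F x * G x := by
    rw [Measure.restrict_apply' (measurableSet_Ioi.prod measurableSet_Ioi), Measure.volume_eq_prod]
    have hprod : Prod.mk x ⁻¹' E ∩ Ioi 0 ×ˢ Ioi 0 =
        (Ioi 0 ∩ {s | ENNReal.ofReal s < F x}) ×ˢ (Ioi 0 ∩ {t | ENNReal.ofReal t < G x}) := by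
      ext st
      simp only [E, mem_inter_iff, mem_preimage, mem_ofPred_eq, mem_prod, mem_Ioi]
      tauto
    rw [hprod, Measure.prod_prod, volume_Ioi_inter_ofReal_lt, volume_Ioi_inter_ofReal_lt]
  calc ∫⁻ x, F x * G x ∂μ = (μ.prod (volume.restrict (Ioi (0 : ℝ) ×ˢ Ioi (0 : ℝ)))) E := by
        simp only [Measure.prod_apply hE, hslice]
    _ = _ := Measure.prod_apply_symm hE

lemma measure_inter_le_of_subset_or_subset {α : Type*} [MeasurableSpace α] (μ : Measure α)
    {A A' B : Set α} (hA : μ A' ≤ μ A) (hAB : A ⊆ B ∨ B ⊆ A) : μ (A' ∩ B) ≤ μ (A ∩ B) := by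
  rcases hAB with hAB | hBA
  · calc μ (A' ∩ B) ≤ μ A' := measure_mono inter_subset_left
      _ ≤ μ A := hA
      _ = μ (A ∩ B) := by rw [inter_eq_left.2 hAB]
  · calc μ (A' ∩ B) ≤ μ B := measure_mono inter_subset_right
      _ = μ (A ∩ B) := by rw [inter_eq_right.2 hBA]

lemma isLowerSet_setOf_lt_of_antitone {β γ : Type*} [Preorder β] [Preorder γ] {F : β → γ}
    (hF : Antitone F) (c : γ) : IsLowerSet {r | c < F r} :=
  fun _ _ hrr' hr => hr.trans_le (hF hrr')

lemma superlevel_norm_subset_or_subset {E : Type*} [Norm E] {F G : ℝ → ℝ≥0∞}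
    (hF : Antitone F) (hG : Antitone G) (c d : ℝ≥0∞) :
    {x : E | c < F ‖x‖} ⊆ {x | d < G ‖x‖} ∨ {x : E | d < G ‖x‖} ⊆ {x | c < F ‖x‖} :=
  ((isLowerSet_setOf_lt_of_antitone hF c).total (isLowerSet_setOf_lt_of_antitone hG d)).imp
    (fun h _ hx => h hx) (fun h _ hx => h hx)

theorem lintegral_antitone_norm_add_mul_le {E : Type*} [NormedAddCommGroup E] [MeasurableSpace E]
    [BorelSpace E] (μ : Measure E) [μ.IsAddRightInvariant] [SFinite μ]
    {F G : ℝ → ℝ≥0∞} (hF : Antitone F) (hG : Antitone G) (a : E) :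
    ∫⁻ x, F ‖x + a‖ * G ‖x‖ ∂μ ≤ ∫⁻ x, F ‖x‖ * G ‖x‖ ∂μ := by
  have hFa : Measurable fun x : E => F ‖x + a‖ :=
    hF.measurable.comp (measurable_add_const a).norm
  have hF0 : Measurable fun x : E => F ‖x‖ := hF.measurable.comp measurable_norm
  have hG0 : Measurable fun x : E => G ‖x‖ := hG.measurable.comp measurable_norm
  rw [lintegral_mul_eq_lintegral_measure_inter_superlevel μ hFa hG0,
    lintegral_mul_eq_lintegral_measure_inter_superlevel μ hF0 hG0]
  refine lintegral_mono fun st => measure_inter_le_of_subset_or_subset μ ?_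
    (superlevel_norm_subset_or_subset hF hG _ _)
  exact (measure_preimage_add_right μ a {x | ENNReal.ofReal st.1 < F ‖x‖}).le

noncomputable def extendByTop (f : ℝ → ℝ) (r : ℝ) : ℝ≥0∞ :=
  if 0 < r then ENNReal.ofReal (f r) else ∞

lemma antitone_extendByTop {f : ℝ → ℝ} (hf : AntitoneOn f (Ioi 0)) :
    Antitone (extendByTop f) := by
  intro r r' hrr'
  unfold extendByTop
  by_cases hr : 0 < r
  · rw [if_pos hr, if_pos (hr.trans_le hrr')]
    exact ENNReal.ofReal_le_ofReal (hf hr (mem_Ioi.2 (hr.trans_le hrr')) hrr')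
  · rw [if_neg hr]
    exact le_top

lemma ofReal_mul_eq_extendByTop_mul {f g : ℝ → ℝ} {r s : ℝ} (hr : 0 < r) (hs : 0 < s)
    (hfr : 0 ≤ f r) : ENNReal.ofReal (f r * g s) = extendByTop f r * extendByTop g s := by
  rw [extendByTop, extendByTop, if_pos hr, if_pos hs, ENNReal.ofReal_mul hfr]

theorem stmt3_general {p : ℕ} (hp : 1 ≤ p) (f g : ℝ → ℝ)
    (hfpos : ∀ x : ℝ, 0 < x → 0 < f x)
    (hf : ∀ ⦃x y : ℝ⦄, 0 < x → x ≤ y → f y ≤ f x)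
    (hg : ∀ ⦃x y : ℝ⦄, 0 < x → x ≤ y → g y ≤ g x)
    (a : EuclideanSpace ℝ (Fin p)) :
    ∫⁻ x : EuclideanSpace ℝ (Fin p), ENNReal.ofReal (f ‖x + a‖ * g ‖x‖)
      ≤ ∫⁻ x : EuclideanSpace ℝ (Fin p), ENNReal.ofReal (f ‖x‖ * g ‖x‖) := by
  have : Nonempty (Fin p) := ⟨⟨0, hp⟩⟩
  have hae (b : EuclideanSpace ℝ (Fin p)) : ∀ᵐ x, ENNReal.ofReal (f ‖x + b‖ * g ‖x‖)
      = extendByTop f ‖x + b‖ * extendByTop g ‖x‖ := by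
    filter_upwards [volume.ae_ne (-b), volume.ae_ne 0] with x hxb hx0
    have hxb' : 0 < ‖x + b‖ := norm_pos_iff.2 fun h => hxb (eq_neg_of_add_eq_zero_left h)
    exact ofReal_mul_eq_extendByTop_mul hxb' (norm_pos_iff.2 hx0) (hfpos _ hxb').le
  have hF := antitone_extendByTop fun x hx _ _ hxy => hf hx hxy
  have hG := antitone_extendByTop fun x hx _ _ hxy => hg hx hxy
  calc _ = ∫⁻ x, extendByTop f ‖x + a‖ * extendByTop g ‖x‖ := lintegral_congr_ae (hae a)
    _ ≤ ∫⁻ x, extendByTop f ‖x‖ * extendByTop g ‖x‖ :=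
        lintegral_antitone_norm_add_mul_le _ hF hG a
    _ = _ := by simpa using (lintegral_congr_ae (hae 0)).symm

/-- Let `p ≥ 1` and let `f, g : (0,∞) → (0,∞)` be decreasing functions.
Then for every `a ∈ ℝ^p`,
`∫_{ℝ^p} f(|x+a|) g(|x|) dx ≤ ∫_{ℝ^p} f(|x|) g(|x|) dx`,
both integrals taken in `[0,∞]` with respect to Lebesgue measure. -/
theorem stmt3 {p : ℕ} (hp : 1 ≤ p) (f g : ℝ → ℝ)
    (hfpos : ∀ x : ℝ, 0 < x → 0 < f x) (hgpos : ∀ x : ℝ, 0 < x → 0 < g x)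
    (hf : ∀ ⦃x y : ℝ⦄, 0 < x → x ≤ y → f y ≤ f x)
    (hg : ∀ ⦃x y : ℝ⦄, 0 < x → x ≤ y → g y ≤ g x)
    (a : EuclideanSpace ℝ (Fin p)) :
    ∫⁻ x : EuclideanSpace ℝ (Fin p), ENNReal.ofReal (f ‖x + a‖ * g ‖x‖)
      ≤ ∫⁻ x : EuclideanSpace ℝ (Fin p), ENNReal.ofReal (f ‖x‖ * g ‖x‖) :=
  stmt3_general hp f g hfpos hf hg a
end

section
/- Let μ be a probability measure on ℝ^p and let (X_1,…,X_n) be a μ-noisy sequence of ℝ^p-valued random variables. Then for all Borel measurable functions f_1,…,f_n : ℝ^p → [0,∞), E ∏_{k=1}^n f_k(X_k) ≤ ∏_{k=1}^n sup_{y∈ℝ^p} ∫_{ℝ^p} f_k(y+z) μ(dz), with both sides taken in [0, ∞]. -/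
open MeasureTheory ProbabilityTheory
open scoped ENNReal

/-! The law of a `μ`-noisy sequence is a convolution `ν ∗ μ^⊗n`. Integrating first over the
noise with the signal `y` fixed, the product `∏ fₖ(yₖ + zₖ)` factorizes under `μ^⊗n` into
`∏ ∫ fₖ(yₖ + z) μ(dz)`, and each factor is at most its supremum over `yₖ`. -/

/-- A finite sequence `X` of `ℝ^p`-valued random variables (on `(Ω, P)`) is `μ`-noisy if
there exist, on some probability space, two independent sequences `Y` and `Z` such that
`(Y₁+Z₁, …, Yₙ+Zₙ)` is distributed like `(X₁, …, Xₙ)` and `Z₁, …, Zₙ` are independent,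
each with distribution `μ`. -/
def IsNoisy {p : ℕ} {Ω : Type*} [MeasurableSpace Ω] (P : Measure Ω)
    (μ : Measure (EuclideanSpace ℝ (Fin p))) {n : ℕ}
    (X : Fin n → Ω → EuclideanSpace ℝ (Fin p)) : Prop :=
  ∃ (Ω' : Type) (_ : MeasurableSpace Ω') (P' : Measure Ω')
    (Y Z : Fin n → Ω' → EuclideanSpace ℝ (Fin p)),
    IsProbabilityMeasure P' ∧
    (∀ k, Measurable (Y k)) ∧ (∀ k, Measurable (Z k)) ∧
    IndepFun (fun ω k => Y k ω) (fun ω k => Z k ω) P' ∧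
    iIndepFun Z P' ∧
    (∀ k, P'.map (Z k) = μ) ∧
    P'.map (fun ω k => Y k ω + Z k ω) = P.map (fun ω k => X k ω)

theorem lintegral_fintype_prod_eq_prod {ι : Type*} [Fintype ι] {E : ι → Type*}
    [∀ i, MeasurableSpace (E i)] (μ : ∀ i, Measure (E i)) [∀ i, IsProbabilityMeasure (μ i)]
    {g : ∀ i, E i → ℝ≥0∞} (hg : ∀ i, Measurable (g i)) :
    ∫⁻ x, ∏ i, g i (x i) ∂Measure.pi μ = ∏ i, ∫⁻ x, g i x ∂μ i := by
  rw [lintegral_prod_eq_prod_lintegral_of_indepFun _ _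
    (iIndepFun_pi fun i => (hg i).aemeasurable) fun i => (hg i).comp (measurable_pi_apply i)]
  exact Finset.prod_congr rfl fun i _ => (measurePreserving_eval μ i).lintegral_comp (hg i)

theorem lintegral_prod_conv_pi_le {ι E : Type*} [Fintype ι] [MeasurableSpace E]
    [AddMonoid E] [MeasurableAdd₂ E] (ν : Measure (ι → E)) [IsProbabilityMeasure ν]
    (μ : ι → Measure E) [∀ i, IsProbabilityMeasure (μ i)] {g : ι → E → ℝ≥0∞}
    (hg : ∀ i, Measurable (g i)) :
    ∫⁻ x, ∏ i, g i (x i) ∂(ν ∗ Measure.pi μ) ≤ ∏ i, ⨆ y, ∫⁻ z, g i (y + z) ∂μ i := by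
  have hprod : Measurable fun x : ι → E => ∏ i, g i (x i) :=
    Finset.measurable_prod _ fun i _ => (hg i).comp (measurable_pi_apply i)
  rw [Measure.lintegral_conv hprod]
  calc ∫⁻ y, ∫⁻ z, ∏ i, g i ((y + z) i) ∂Measure.pi μ ∂ν
      = ∫⁻ y, ∏ i, ∫⁻ z, g i (y i + z) ∂μ i ∂ν :=
        lintegral_congr fun y => lintegral_fintype_prod_eq_prod μ fun i =>
          (hg i).comp (measurable_const_add _)
    _ ≤ ∫⁻ _, ∏ i, ⨆ y, ∫⁻ z, g i (y + z) ∂μ i ∂ν :=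
        lintegral_mono fun y => Finset.prod_le_prod' fun i _ =>
          le_iSup (fun y' => ∫⁻ z, g i (y' + z) ∂μ i) (y i)
    _ = ∏ i, ⨆ y, ∫⁻ z, g i (y + z) ∂μ i := by
        rw [lintegral_const, measure_univ, mul_one]

theorem IsNoisy.exists_map_eq_conv_pi {p : ℕ} {Ω : Type*} [MeasurableSpace Ω] {P : Measure Ω}
    {μ : Measure (EuclideanSpace ℝ (Fin p))} {n : ℕ} {X : Fin n → Ω → EuclideanSpace ℝ (Fin p)}
    (hX : IsNoisy P μ X) :
    ∃ ν : Measure (Fin n → EuclideanSpace ℝ (Fin p)), IsProbabilityMeasure ν ∧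
      P.map (fun ω k => X k ω) = ν ∗ Measure.pi fun _ => μ := by
  obtain ⟨Ω', _, P', Y, Z, _, hY, hZ, hYZ, hZind, hZlaw, hlaw⟩ := hX
  refine ⟨P'.map fun ω k => Y k ω, Measure.isProbabilityMeasure_map (by fun_prop), ?_⟩
  rw [← hlaw, ← funext hZlaw, ← hZind.map_fun_eq_pi_map fun k => (hZ k).aemeasurable]
  exact hYZ.map_add_eq_map_conv_map (by fun_prop) (by fun_prop)

theorem stmt4_general {p : ℕ} {Ω : Type*} [MeasurableSpace Ω] (P : Measure Ω)
    (μ : Measure (EuclideanSpace ℝ (Fin p))) [IsProbabilityMeasure μ] {n : ℕ}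
    (X : Fin n → Ω → EuclideanSpace ℝ (Fin p)) (hXmeas : ∀ k, Measurable (X k))
    (hX : IsNoisy P μ X)
    (f : Fin n → EuclideanSpace ℝ (Fin p) → ℝ)
    (hfmeas : ∀ k, Measurable (f k)) (hfpos : ∀ k x, 0 ≤ f k x) :
    ∫⁻ ω, ENNReal.ofReal (∏ k, f k (X k ω)) ∂P
      ≤ ∏ k, ⨆ y : EuclideanSpace ℝ (Fin p),
          ∫⁻ z, ENNReal.ofReal (f k (y + z)) ∂μ := by
  obtain ⟨ν, _, hlaw⟩ := hX.exists_map_eq_conv_pi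
  have hg (k : Fin n) : Measurable fun x => ENNReal.ofReal (f k x) := (hfmeas k).ennreal_ofReal
  have hprod : Measurable fun x : Fin n → EuclideanSpace ℝ (Fin p) =>
      ∏ k, ENNReal.ofReal (f k (x k)) :=
    Finset.measurable_prod _ fun k _ => (hg k).comp (measurable_pi_apply k)
  calc ∫⁻ ω, ENNReal.ofReal (∏ k, f k (X k ω)) ∂P
      = ∫⁻ x, ∏ k, ENNReal.ofReal (f k (x k)) ∂(P.map fun ω k => X k ω) := by
        rw [lintegral_map hprod (measurable_pi_lambda _ hXmeas)]
        exact lintegral_congr fun ω => ENNReal.ofReal_prod_of_nonneg fun k _ => hfpos k _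
    _ ≤ _ := hlaw ▸ lintegral_prod_conv_pi_le ν (fun _ => μ) hg

/-- If `(X₁,…,Xₙ)` is a `μ`-noisy sequence of `ℝ^p`-valued random variables,
then for all Borel measurable `f₁,…,fₙ : ℝ^p → [0,∞)`,
`E ∏ₖ fₖ(Xₖ) ≤ ∏ₖ sup_y ∫ fₖ(y+z) μ(dz)`, both sides in `[0,∞]`. -/
theorem stmt4 {p : ℕ} {Ω : Type*} [MeasurableSpace Ω] (P : Measure Ω)
    [IsProbabilityMeasure P]
    (μ : Measure (EuclideanSpace ℝ (Fin p))) [IsProbabilityMeasure μ] {n : ℕ}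
    (X : Fin n → Ω → EuclideanSpace ℝ (Fin p)) (hXmeas : ∀ k, Measurable (X k))
    (hX : IsNoisy P μ X)
    (f : Fin n → EuclideanSpace ℝ (Fin p) → ℝ)
    (hfmeas : ∀ k, Measurable (f k)) (hfpos : ∀ k x, 0 ≤ f k x) :
    ∫⁻ ω, ENNReal.ofReal (∏ k, f k (X k ω)) ∂P
      ≤ ∏ k, ⨆ y : EuclideanSpace ℝ (Fin p),
          ∫⁻ z, ENNReal.ofReal (f k (y + z)) ∂μ :=
  stmt4_general P μ X hXmeas hX f hfmeas hfpos
end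

section
/- Let ψ : ℝ^p → ℝ and g : ℝ^p → ℝ be Borel measurable functions and μ a probability measure on ℝ^p satisfying log ∫_{ℝ^p} exp|ψ(x+y) − ψ(x−y)| μ_h(dx) ≤ g(y) for all y, h ∈ ℝ^p. Then E exp(Σ_{k=1}^n |ψ(X_k+Y_k) − ψ(X_k−Y_k)|) ≤ E exp(Σ_{k=1}^n g(Y_k)) for every pair of independent sequences X = (X_1,…,X_n) and Y = (Y_1,…,Y_n) of ℝ^p-valued random variables such that X is μ-noisy (the whole sequence X is independent of the whole sequence Y, while dependence is allowed within each sequence). Both expectations are taken in [0, ∞]. -/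
/-!
Condition on `Y`: by independence it suffices to bound, for a fixed `y`, the expectation of
`∏ₖ exp |ψ(Xₖ + yₖ) − ψ(Xₖ − yₖ)|`. Writing `X` in law as `Y' + Z`, with `Z` an i.i.d. `μ`-sequence
independent of `Y'`, condition once more, now on `Y' = h`: the expectation of the product over the
independent `Zₖ` factorises into the integrals `∫ exp |ψ(x + hₖ + yₖ) − ψ(x + hₖ − yₖ)| μ(dx)`,
each at most `exp (g yₖ)` by hypothesis, whatever the shift `hₖ`.
-/

open MeasureTheory ProbabilityTheory
open scoped ENNReal

namespace ProbabilityTheory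

theorem IndepFun.lintegral_comp_eq_lintegral_lintegral {Ω α β : Type*}
    [MeasurableSpace Ω] [MeasurableSpace α] [MeasurableSpace β] {P : Measure Ω} [IsFiniteMeasure P]
    {X : Ω → α} {Y : Ω → β} (hXY : IndepFun X Y P) (hX : Measurable X) (hY : Measurable Y)
    {f : α × β → ℝ≥0∞} (hf : Measurable f) :
    ∫⁻ ω, f (X ω, Y ω) ∂P = ∫⁻ ω, ∫⁻ ω', f (X ω, Y ω') ∂P ∂P := by
  have hinner : ∀ x, ∫⁻ y, f (x, y) ∂P.map Y = ∫⁻ ω', f (x, Y ω') ∂P := fun x =>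
    lintegral_map (hf.comp measurable_prodMk_left) hY
  calc ∫⁻ ω, f (X ω, Y ω) ∂P = ∫⁻ q, f q ∂P.map (fun ω => (X ω, Y ω)) :=
        (lintegral_map hf (hX.prodMk hY)).symm
    _ = ∫⁻ x, ∫⁻ y, f (x, y) ∂P.map Y ∂P.map X := by
        rw [(indepFun_iff_map_prod_eq_prod_map_map hX.aemeasurable hY.aemeasurable).mp hXY,
          lintegral_prod _ hf.aemeasurable]
    _ = ∫⁻ ω, ∫⁻ ω', f (X ω, Y ω') ∂P ∂P := by
        simp_rw [← hinner]
        exact lintegral_map hf.lintegral_prod_right' hX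

theorem iIndepFun.lintegral_prod_comp {Ω ι α : Type*} [MeasurableSpace Ω]
    [MeasurableSpace α] [Fintype ι] {P : Measure Ω} {Z : ι → Ω → α} (hZ : iIndepFun Z P)
    (hZm : ∀ i, Measurable (Z i)) {f : ι → α → ℝ≥0∞} (hf : ∀ i, Measurable (f i)) :
    ∫⁻ ω, ∏ i, f i (Z i ω) ∂P = ∏ i, ∫⁻ x, f i x ∂P.map (Z i) := by
  rw [lintegral_prod_eq_prod_lintegral_of_indepFun _ (fun i ω => f i (Z i ω)) (hZ.comp f hf)
    fun i => (hf i).comp (hZm i)]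
  exact Finset.prod_congr rfl fun i _ => (lintegral_map (hf i) (hZm i)).symm

end ProbabilityTheory

theorem IsNoisy.lintegral_prod_le {p : ℕ} {Ω : Type*} [MeasurableSpace Ω] {P : Measure Ω}
    {μ : Measure (EuclideanSpace ℝ (Fin p))} {n : ℕ} {X : Fin n → Ω → EuclideanSpace ℝ (Fin p)}
    (hX : IsNoisy P μ X) (hXm : ∀ k, Measurable (X k))
    {f : Fin n → EuclideanSpace ℝ (Fin p) → ℝ≥0∞} (hf : ∀ k, Measurable (f k))
    {c : Fin n → ℝ≥0∞} (hc : ∀ k h, ∫⁻ z, f k (z + h) ∂μ ≤ c k) :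
    ∫⁻ ω, ∏ k, f k (X k ω) ∂P ≤ ∏ k, c k := by
  obtain ⟨Ω', _, P', Y, Z, _, hYm, hZm, hYZ, hZ, hZlaw, hlaw⟩ := hX
  have hF : Measurable fun x : Fin n → EuclideanSpace ℝ (Fin p) => ∏ k, f k (x k) := by
    fun_prop
  calc ∫⁻ ω, ∏ k, f k (X k ω) ∂P
      = ∫⁻ ω, ∏ k, f k (Z k ω + Y k ω) ∂P' := by
        rw [← lintegral_map hF (measurable_pi_lambda _ hXm), ← hlaw, lintegral_map hF
          (measurable_pi_lambda (fun ω k => Y k ω + Z k ω) fun k => (hYm k).add (hZm k))]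
        simp_rw [add_comm]
    _ = ∫⁻ ω, ∫⁻ ω', ∏ k, f k (Z k ω' + Y k ω) ∂P' ∂P' :=
        hYZ.lintegral_comp_eq_lintegral_lintegral (f := fun q => ∏ k, f k (q.2 k + q.1 k))
          (measurable_pi_lambda _ hYm) (measurable_pi_lambda _ hZm) (by fun_prop)
    _ ≤ ∫⁻ _, ∏ k, c k ∂P' := lintegral_mono fun ω => ?_
    _ = ∏ k, c k := by simp
  rw [hZ.lintegral_prod_comp hZm (f := fun k z => f k (z + Y k ω))
    fun k => (hf k).comp (measurable_add_const _)]
  exact Finset.prod_le_prod' fun k _ => hZlaw k ▸ hc k (Y k ω)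

theorem ENNReal.ofReal_exp_sum {ι : Type*} (s : Finset ι) (f : ι → ℝ) :
    ENNReal.ofReal (Real.exp (∑ i ∈ s, f i)) = ∏ i ∈ s, ENNReal.ofReal (Real.exp (f i)) := by
  rw [Real.exp_sum, ENNReal.ofReal_prod_of_nonneg fun i _ => (Real.exp_pos _).le]

theorem stmt5_general {p : ℕ}
    (ψ g : EuclideanSpace ℝ (Fin p) → ℝ) (hψ : Measurable ψ)
    (μ : Measure (EuclideanSpace ℝ (Fin p)))
    (hcond : ∀ y h : EuclideanSpace ℝ (Fin p),
      ∫⁻ x, ENNReal.ofReal (Real.exp |ψ (x + h + y) - ψ (x + h - y)|) ∂μ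
        ≤ ENNReal.ofReal (Real.exp (g y)))
    {Ω : Type*} [MeasurableSpace Ω] (P : Measure Ω) [IsProbabilityMeasure P] {n : ℕ}
    (X Y : Fin n → Ω → EuclideanSpace ℝ (Fin p))
    (hXmeas : ∀ k, Measurable (X k)) (hYmeas : ∀ k, Measurable (Y k))
    (hindep : IndepFun (fun ω k => X k ω) (fun ω k => Y k ω) P)
    (hX : IsNoisy P μ X) :
    ∫⁻ ω, ENNReal.ofReal (Real.exp (∑ k, |ψ (X k ω + Y k ω) - ψ (X k ω - Y k ω)|)) ∂P
      ≤ ∫⁻ ω, ENNReal.ofReal (Real.exp (∑ k, g (Y k ω))) ∂P := by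
  simp_rw [ENNReal.ofReal_exp_sum]
  calc ∫⁻ ω, ∏ k, ENNReal.ofReal (Real.exp |ψ (X k ω + Y k ω) - ψ (X k ω - Y k ω)|) ∂P
      = ∫⁻ ω, ∫⁻ ω', ∏ k, ENNReal.ofReal
          (Real.exp |ψ (X k ω' + Y k ω) - ψ (X k ω' - Y k ω)|) ∂P ∂P :=
        hindep.symm.lintegral_comp_eq_lintegral_lintegral
          (f := fun q => ∏ k, ENNReal.ofReal (Real.exp |ψ (q.2 k + q.1 k) - ψ (q.2 k - q.1 k)|))
          (measurable_pi_lambda _ hYmeas) (measurable_pi_lambda _ hXmeas) (by fun_prop)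
    _ ≤ ∫⁻ ω, ∏ k, ENNReal.ofReal (Real.exp (g (Y k ω))) ∂P :=
        lintegral_mono fun ω => hX.lintegral_prod_le hXmeas
          (f := fun k z => ENNReal.ofReal (Real.exp |ψ (z + Y k ω) - ψ (z - Y k ω)|))
          (fun k => by fun_prop) fun k => hcond (Y k ω)

/-- Let `ψ, g : ℝ^p → ℝ` be Borel measurable and `μ` a probability measure
on `ℝ^p` with `log ∫ exp |ψ(x+y) − ψ(x−y)| μ_h(dx) ≤ g(y)` for all `y, h`
(equivalently `∫ exp |ψ(x+h+y) − ψ(x+h−y)| μ(dx) ≤ exp (g y)`).  Then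
`E exp (Σₖ |ψ(Xₖ+Yₖ) − ψ(Xₖ−Yₖ)|) ≤ E exp (Σₖ g(Yₖ))`
for every pair of independent sequences `X`, `Y` of `ℝ^p`-valued random variables such that
`X` is `μ`-noisy. -/
theorem stmt5 {p : ℕ}
    (ψ g : EuclideanSpace ℝ (Fin p) → ℝ) (hψ : Measurable ψ) (hg : Measurable g)
    (μ : Measure (EuclideanSpace ℝ (Fin p))) [IsProbabilityMeasure μ]
    (hcond : ∀ y h : EuclideanSpace ℝ (Fin p),
      ∫⁻ x, ENNReal.ofReal (Real.exp |ψ (x + h + y) - ψ (x + h - y)|) ∂μ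
        ≤ ENNReal.ofReal (Real.exp (g y)))
    {Ω : Type*} [MeasurableSpace Ω] (P : Measure Ω) [IsProbabilityMeasure P] {n : ℕ}
    (X Y : Fin n → Ω → EuclideanSpace ℝ (Fin p))
    (hXmeas : ∀ k, Measurable (X k)) (hYmeas : ∀ k, Measurable (Y k))
    (hindep : IndepFun (fun ω k => X k ω) (fun ω k => Y k ω) P)
    (hX : IsNoisy P μ X) :
    ∫⁻ ω, ENNReal.ofReal (Real.exp (∑ k, |ψ (X k ω + Y k ω) - ψ (X k ω - Y k ω)|)) ∂P
      ≤ ∫⁻ ω, ENNReal.ofReal (Real.exp (∑ k, g (Y k ω))) ∂P :=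
  stmt5_general ψ g hψ μ hcond P X Y hXmeas hYmeas hindep hX
end

section
/- Let p ≥ 2 and σ ∈ (0,∞), and let μ be the rotation-invariant Gaussian measure on ℝ^p with density (2πσ²)^{-p/2} exp(−|x|²/(2σ²)) with respect to Lebesgue measure. Then there exists a constant C (depending only on p and σ) such that for all y, h ∈ ℝ^p, ∫_{ℝ^p} exp| log|x+y| − log|x−y| | μ_h(dx) ≤ exp(C|y|). -/
/-!
Since `exp |log a - log b| = max (a / b) (b / a)`, for `a = ‖x + y‖`, `b = ‖x - y‖` one has
`exp |log a - log b| ≤ 1 + |a - b| (a⁻¹ + b⁻¹) ≤ 1 + 2‖y‖ (‖x + y‖⁻¹ + ‖x - y‖⁻¹)`.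
So it suffices to bound the potentials `∫ ‖x - z‖⁻¹ dμ(x)` uniformly in `z`, and then
`1 + 4B‖y‖ ≤ exp (4B‖y‖)`. Near `z` the Gaussian density is bounded and `‖x‖⁻¹` is locally
integrable in dimension at least two; away from `z` the integrand is at most the density.
-/

open MeasureTheory Metric
open scoped ENNReal

theorem Real.exp_abs_log_sub_log_le {a b : ℝ} (ha : 0 < a) (hb : 0 < b) :
    Real.exp |Real.log a - Real.log b| ≤ 1 + |a - b| * (a⁻¹ + b⁻¹) := by
  have hia : 0 ≤ |a - b| * a⁻¹ := by positivity
  have hib : 0 ≤ |a - b| * b⁻¹ := by positivity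
  rcases abs_cases (Real.log a - Real.log b) with ⟨h, -⟩ | ⟨h, -⟩
  · have : a / b = 1 + (a - b) * b⁻¹ := by field_simp; ring
    rw [h, Real.exp_sub, Real.exp_log ha, Real.exp_log hb, this]
    nlinarith [le_abs_self (a - b), inv_pos.2 hb]
  · have : b / a = 1 + (b - a) * a⁻¹ := by field_simp; ring
    rw [h, neg_sub, Real.exp_sub, Real.exp_log ha, Real.exp_log hb, this]
    nlinarith [neg_abs_le (a - b), inv_pos.2 ha]

section NormedGroup

variable {E : Type*} [NormedAddCommGroup E]

theorem ofReal_exp_abs_log_norm_sub_log_norm_le (u v : E) :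
    ENNReal.ofReal (Real.exp |Real.log ‖u‖ - Real.log ‖v‖|) ≤
      1 + ‖u - v‖ₑ * (‖u‖ₑ⁻¹ + ‖v‖ₑ⁻¹) := by
  rcases eq_or_ne u v with rfl | huv
  · simp
  have huv' : ‖u - v‖ₑ ≠ 0 := by simpa [sub_eq_zero] using huv
  rcases eq_or_ne u 0 with rfl | hu
  · rw [enorm_zero, ENNReal.inv_zero, top_add, ENNReal.mul_top huv', add_top]
    exact le_top
  rcases eq_or_ne v 0 with rfl | hv
  · rw [enorm_zero, ENNReal.inv_zero, add_top, ENNReal.mul_top huv', add_top]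
    exact le_top
  have hu' := norm_pos_iff.2 hu
  have hv' := norm_pos_iff.2 hv
  calc ENNReal.ofReal (Real.exp |Real.log ‖u‖ - Real.log ‖v‖|)
      ≤ ENNReal.ofReal (1 + ‖u - v‖ * (‖u‖⁻¹ + ‖v‖⁻¹)) := by
        refine ENNReal.ofReal_le_ofReal ((Real.exp_abs_log_sub_log_le hu' hv').trans ?_)
        gcongr
        exact abs_norm_sub_norm_le u v
    _ = 1 + ‖u - v‖ₑ * (‖u‖ₑ⁻¹ + ‖v‖ₑ⁻¹) := by
        rw [ENNReal.ofReal_add zero_le_one (by positivity), ENNReal.ofReal_one,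
          ENNReal.ofReal_mul (norm_nonneg _), ENNReal.ofReal_add (by positivity) (by positivity),
          ENNReal.ofReal_inv_of_pos hu', ENNReal.ofReal_inv_of_pos hv', ofReal_norm, ofReal_norm,
          ofReal_norm]

variable [MeasurableSpace E] [BorelSpace E]

theorem lintegral_exp_abs_log_norm_add_sub_log_norm_sub_le {ν : Measure E}
    [IsProbabilityMeasure ν] {B : ℝ≥0∞} (hB : B ≠ ⊤) (hpot : ∀ z, ∫⁻ x, ‖x - z‖ₑ⁻¹ ∂ν ≤ B)
    (y h : E) :
    ∫⁻ x, ENNReal.ofReal (Real.exp |Real.log ‖x + h + y‖ - Real.log ‖x + h - y‖|) ∂ν ≤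
      ENNReal.ofReal (Real.exp (4 * B.toReal * ‖y‖)) := by
  have hpot₁ : ∫⁻ x, ‖x + h + y‖ₑ⁻¹ ∂ν ≤ B := by
    simpa only [sub_neg_eq_add, add_assoc] using hpot (-(h + y))
  have hpot₂ : ∫⁻ x, ‖x + h - y‖ₑ⁻¹ ∂ν ≤ B := by
    simpa only [sub_sub_eq_add_sub, add_sub_assoc] using hpot (y - h)
  calc ∫⁻ x, ENNReal.ofReal (Real.exp |Real.log ‖x + h + y‖ - Real.log ‖x + h - y‖|) ∂ν
      ≤ ∫⁻ x, 1 + ‖y + y‖ₑ * (‖x + h + y‖ₑ⁻¹ + ‖x + h - y‖ₑ⁻¹) ∂ν := by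
        refine lintegral_mono fun x => ?_
        convert ofReal_exp_abs_log_norm_sub_log_norm_le (x + h + y) (x + h - y) using 4
        abel
    _ = 1 + ‖y + y‖ₑ * (∫⁻ x, ‖x + h + y‖ₑ⁻¹ ∂ν + ∫⁻ x, ‖x + h - y‖ₑ⁻¹ ∂ν) := by
        rw [lintegral_add_left measurable_const, lintegral_const, measure_univ, mul_one,
          lintegral_const_mul' _ _ enorm_ne_top, lintegral_add_left (by fun_prop)]
    _ ≤ 1 + (‖y‖ₑ + ‖y‖ₑ) * (B + B) := by gcongr; exact enorm_add_le y y
    _ = ENNReal.ofReal (1 + 4 * B.toReal * ‖y‖) := by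
        rw [← ofReal_norm, ← ENNReal.ofReal_toReal hB,
          ← ENNReal.ofReal_add (norm_nonneg y) (norm_nonneg y),
          ← ENNReal.ofReal_add ENNReal.toReal_nonneg ENNReal.toReal_nonneg,
          ← ENNReal.ofReal_mul (by positivity), ← ENNReal.ofReal_one,
          ← ENNReal.ofReal_add zero_le_one (by positivity),
          ENNReal.toReal_ofReal ENNReal.toReal_nonneg]
        congr 1
        ring
    _ ≤ ENNReal.ofReal (Real.exp (4 * B.toReal * ‖y‖)) := by
        gcongr
        linarith [Real.add_one_le_exp (4 * B.toReal * ‖y‖)]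

theorem lintegral_enorm_sub_inv_withDensity_le (μ : Measure E) [μ.IsAddRightInvariant]
    {ρ : E → ℝ≥0∞} (hρ : Measurable ρ) {c : ℝ≥0∞} (hρc : ∀ x, ρ x ≤ c) (z : E) :
    ∫⁻ x, ‖x - z‖ₑ⁻¹ ∂μ.withDensity ρ ≤ c * ∫⁻ x in ball 0 1, ‖x‖ₑ⁻¹ ∂μ + ∫⁻ x, ρ x ∂μ := by
  set F : E → ℝ≥0∞ := (ball 0 1).indicator fun x => ‖x‖ₑ⁻¹ with hF
  have hFm : Measurable F := (measurable_enorm.inv).indicator measurableSet_ball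
  -- inside the unit ball around `z` use `ρ ≤ c`, outside use `‖x - z‖⁻¹ ≤ 1`
  have hpt : ∀ x, ρ x * ‖x - z‖ₑ⁻¹ ≤ c * F (x - z) + ρ x := by
    intro x
    by_cases hx : x - z ∈ ball 0 1
    · rw [hF, Set.indicator_of_mem hx]
      exact le_add_right (mul_le_mul_left (hρc x) _)
    · have h1 : ‖x - z‖ₑ⁻¹ ≤ 1 := by
        rw [ENNReal.inv_le_one, ← ofReal_norm, ENNReal.one_le_ofReal]
        simpa using hx
      exact le_add_left (mul_le_of_le_one_right' h1)
  calc ∫⁻ x, ‖x - z‖ₑ⁻¹ ∂μ.withDensity ρ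
      = ∫⁻ x, ρ x * ‖x - z‖ₑ⁻¹ ∂μ :=
        lintegral_withDensity_eq_lintegral_mul _ hρ (by fun_prop)
    _ ≤ ∫⁻ x, c * F (x - z) + ρ x ∂μ := lintegral_mono hpt
    _ = c * ∫⁻ x, F x ∂μ + ∫⁻ x, ρ x ∂μ := by
        rw [lintegral_add_left (by fun_prop), lintegral_const_mul _ (by fun_prop),
          lintegral_sub_right_eq_self F z]
    _ = c * ∫⁻ x in ball 0 1, ‖x‖ₑ⁻¹ ∂μ + ∫⁻ x, ρ x ∂μ := by
        rw [hF, lintegral_indicator measurableSet_ball]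

theorem setLIntegral_ball_enorm_inv_lt_top [NormedSpace ℝ E] [FiniteDimensional ℝ E]
    (μ : Measure E) [μ.IsAddHaarMeasure] (hE : 1 < Module.finrank ℝ E) (r : ℝ) :
    ∫⁻ x in ball 0 r, ‖x‖ₑ⁻¹ ∂μ < ⊤ := by
  have : Nontrivial E := Module.nontrivial_of_finrank_pos (R := ℝ) (by omega)
  have hint : IntegrableOn (fun x : E => ‖x‖⁻¹) (ball 0 r) μ := by
    refine integrableOn_ball_of_norm_le_rpow (C := 1) (α := 1) hE.le (by exact_mod_cast hE)
      (ae_of_all _ fun x => ?_) (by fun_prop)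
    simp [Real.rpow_neg_one]
  calc ∫⁻ x in ball 0 r, ‖x‖ₑ⁻¹ ∂μ = ∫⁻ x in ball 0 r, ‖‖x‖⁻¹‖ₑ ∂μ := by
        refine lintegral_congr_ae (ae_restrict_of_ae ?_)
        filter_upwards [compl_mem_ae_iff.2 (measure_singleton (μ := μ) 0)] with x hx
        rw [enorm_inv (norm_ne_zero_iff.2 hx), enorm_norm]
    _ < ⊤ := hint.2

end NormedGroup

theorem lintegral_gaussian_density_eq_one {V : Type*} [NormedAddCommGroup V]
    [InnerProductSpace ℝ V] [FiniteDimensional ℝ V] [MeasurableSpace V] [BorelSpace V]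
    {σ : ℝ} (hσ : σ ≠ 0) :
    ∫⁻ x : V, ENNReal.ofReal ((2 * Real.pi * σ ^ 2) ^ (-(Module.finrank ℝ V : ℝ) / 2) *
      Real.exp (-‖x‖ ^ 2 / (2 * σ ^ 2))) = 1 := by
  have hπ : 0 < 2 * Real.pi * σ ^ 2 := by positivity
  have hb : 0 < (2 * σ ^ 2)⁻¹ := by positivity
  have hexp : ∀ x : V, -‖x‖ ^ 2 / (2 * σ ^ 2) = -(2 * σ ^ 2)⁻¹ * ‖x‖ ^ 2 := fun x => by
    field_simp
  have hval : ∫ x : V, Real.exp (-(2 * σ ^ 2)⁻¹ * ‖x‖ ^ 2) =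
      (2 * Real.pi * σ ^ 2) ^ ((Module.finrank ℝ V : ℝ) / 2) := by
    rw [GaussianFourier.integral_rexp_neg_mul_sq_norm hb]
    congr 1
    field_simp
  have hint : Integrable fun x : V => Real.exp (-(2 * σ ^ 2)⁻¹ * ‖x‖ ^ 2) :=
    Integrable.of_integral_ne_zero (by rw [hval]; positivity)
  simp_rw [hexp]
  rw [← ofReal_integral_eq_lintegral_ofReal (hint.const_mul _)
      (ae_of_all _ fun x => by positivity), integral_const_mul, hval, ← Real.rpow_add hπ,
    neg_div, neg_add_cancel, Real.rpow_zero, ENNReal.ofReal_one]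

/-- Let `p ≥ 2`, `σ ∈ (0,∞)`, and let `μ` be the rotation-invariant
Gaussian measure on `ℝ^p` with density `(2πσ²)^{-p/2} exp(−|x|²/(2σ²))` with respect to
Lebesgue measure.  Then there is a constant `C` (depending only on `p` and `σ`) such that
for all `y, h ∈ ℝ^p`,
`∫ exp |log|x+y| − log|x−y|| μ_h(dx) ≤ exp (C |y|)`
(the shifted measure `μ_h` being realized by evaluating the integrand at `x + h`). -/
theorem stmt6 (p : ℕ) (hp : 2 ≤ p) (σ : ℝ) (hσ : 0 < σ) :
    ∃ C : ℝ, ∀ y h : EuclideanSpace ℝ (Fin p),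
      ∫⁻ x, ENNReal.ofReal (Real.exp |Real.log ‖x + h + y‖ - Real.log ‖x + h - y‖|)
          ∂(volume.withDensity fun x : EuclideanSpace ℝ (Fin p) =>
              ENNReal.ofReal ((2 * Real.pi * σ ^ 2) ^ (-(p : ℝ) / 2) *
                Real.exp (-‖x‖ ^ 2 / (2 * σ ^ 2))))
        ≤ ENNReal.ofReal (Real.exp (C * ‖y‖)) := by
  set c := (2 * Real.pi * σ ^ 2) ^ (-(p : ℝ) / 2)
  set ρ : EuclideanSpace ℝ (Fin p) → ℝ≥0∞ :=
    fun x => ENNReal.ofReal (c * Real.exp (-‖x‖ ^ 2 / (2 * σ ^ 2)))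
  have hρ : Measurable ρ := by fun_prop
  have hρc : ∀ x, ρ x ≤ ENNReal.ofReal c := fun x => by
    refine ENNReal.ofReal_le_ofReal (mul_le_of_le_one_right (by positivity) ?_)
    rw [Real.exp_le_one_iff, neg_div]
    exact neg_nonpos.2 (by positivity)
  have hmass : ∫⁻ x, ρ x = 1 := by
    simpa only [finrank_euclideanSpace_fin] using
      lintegral_gaussian_density_eq_one (V := EuclideanSpace ℝ (Fin p)) hσ.ne'
  have : IsProbabilityMeasure (volume.withDensity ρ) :=
    ⟨by rw [withDensity_apply _ MeasurableSet.univ, Measure.restrict_univ, hmass]⟩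
  have hdim : 1 < Module.finrank ℝ (EuclideanSpace ℝ (Fin p)) := by
    rw [finrank_euclideanSpace_fin]; omega
  set B := ENNReal.ofReal c * (∫⁻ x in ball (0 : EuclideanSpace ℝ (Fin p)) 1, ‖x‖ₑ⁻¹) + 1
  have hB : B ≠ ⊤ := by
    have := setLIntegral_ball_enorm_inv_lt_top volume hdim 1
    finiteness
  refine ⟨4 * B.toReal, lintegral_exp_abs_log_norm_add_sub_log_norm_sub_le hB fun z => ?_⟩
  simpa only [hmass] using lintegral_enorm_sub_inv_withDensity_le volume hρ hρc z
end

section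
/- Let K₁, K₂ ⊆ ℝ² be closed cones with K₁ ∩ K₂ = {0}. Then for every α > 6, ∫_{K₁} √( ∫_{K₂} (1+|t−s|)^{−α} ds ) dt < ∞, where both integrals are with respect to Lebesgue measure on ℝ². -/
/-!
Two closed cones meeting only at `0` are uniformly transversal: by compactness of the unit
sphere there is `c > 0` with `c (1 + max ‖t‖ ‖s‖) ≤ 1 + ‖t - s‖` for `t ∈ K₁`, `s ∈ K₂`. Hence
the kernel `(1 + ‖t - s‖)^(-α)` is dominated by a product `(1 + ‖t‖)^(-p) (1 + ‖s‖)^(-q)` with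
`p + q = α`, and the inner integral is at most a constant times `(1 + ‖t‖)^(-p)`. Its square root
is integrable as soon as `p / 2` and `q` both exceed the dimension `n`, which `α > 3n` allows.
-/

open MeasureTheory
open scoped ENNReal

/-- A closed cone in `ℝ²`: a closed set stable under multiplication by nonnegative scalars. -/
def IsClosedCone (K : Set (EuclideanSpace ℝ (Fin 2))) : Prop :=
  IsClosed K ∧ ∀ x ∈ K, ∀ l : ℝ, 0 ≤ l → l • x ∈ K

open Module Metric

section Cones

variable {V : Type*} [NormedAddCommGroup V] [NormedSpace ℝ V] {K₁ K₂ : Set V}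

/-- The minimum of `‖t - s‖` over the compact set `{(t, s) ∈ K₁ × K₂ : max ‖t‖ ‖s‖ = 1}` is
positive; homogeneity spreads it to all of `K₁ × K₂`. -/
theorem exists_pos_mul_max_norm_le_norm_sub_of_inter_eq_zero [ProperSpace V]
    (hc₁ : IsClosed K₁) (hs₁ : ∀ x ∈ K₁, ∀ l : ℝ, 0 ≤ l → l • x ∈ K₁)
    (hc₂ : IsClosed K₂) (hs₂ : ∀ x ∈ K₂, ∀ l : ℝ, 0 ≤ l → l • x ∈ K₂)
    (hK : K₁ ∩ K₂ = {0}) :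
    ∃ c > 0, ∀ t ∈ K₁, ∀ s ∈ K₂, c * max ‖t‖ ‖s‖ ≤ ‖t - s‖ := by
  set S : Set (V × V) := (K₁ ×ˢ K₂) ∩ sphere 0 1
  have hS : IsCompact S := (isCompact_sphere 0 1).inter_left (hc₁.prod hc₂)
  have hpos : ∀ x ∈ S, (0 : ℝ) < ‖x.1 - x.2‖ := by
    rintro ⟨t, s⟩ ⟨⟨ht, hs⟩, hnorm⟩
    refine norm_pos_iff.2 fun hts => ?_
    obtain rfl : t = s := sub_eq_zero.1 hts
    have ht0 : t ∈ K₁ ∩ K₂ := ⟨ht, hs⟩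
    rw [hK, Set.mem_singleton_iff] at ht0
    simp [ht0] at hnorm
  obtain ⟨c, hc, hcS⟩ := hS.exists_forall_le' (by fun_prop) hpos
  refine ⟨c, hc, fun t ht s hs => ?_⟩
  rcases eq_or_ne (t, s) 0 with hts | hts
  · obtain ⟨rfl, rfl⟩ := Prod.ext_iff.1 hts
    simp
  set r := ‖(t, s)‖ with hr
  have hr0 : 0 < r := norm_pos_iff.2 hts
  have hmem : r⁻¹ • (t, s) ∈ S :=
    ⟨⟨hs₁ t ht _ (inv_nonneg.2 hr0.le), hs₂ s hs _ (inv_nonneg.2 hr0.le)⟩, by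
      rw [mem_sphere_zero_iff_norm, norm_smul, Real.norm_of_nonneg (inv_nonneg.2 hr0.le),
        inv_mul_cancel₀ hr0.ne']⟩
  have := hcS _ hmem
  rw [Prod.smul_fst, Prod.smul_snd, ← smul_sub, norm_smul, Real.norm_of_nonneg (by positivity),
    le_inv_mul_iff₀ hr0] at this
  simpa [hr, Prod.norm_mk, mul_comm] using this

theorem exists_pos_mul_one_add_max_norm_le_one_add_norm_sub [ProperSpace V]
    (hc₁ : IsClosed K₁) (hs₁ : ∀ x ∈ K₁, ∀ l : ℝ, 0 ≤ l → l • x ∈ K₁)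
    (hc₂ : IsClosed K₂) (hs₂ : ∀ x ∈ K₂, ∀ l : ℝ, 0 ≤ l → l • x ∈ K₂)
    (hK : K₁ ∩ K₂ = {0}) :
    ∃ c > 0, ∀ t ∈ K₁, ∀ s ∈ K₂, c * (1 + max ‖t‖ ‖s‖) ≤ 1 + ‖t - s‖ := by
  obtain ⟨c, hc, hsep⟩ :=
    exists_pos_mul_max_norm_le_norm_sub_of_inter_eq_zero hc₁ hs₁ hc₂ hs₂ hK
  refine ⟨min c 1, lt_min hc one_pos, fun t ht s hs => ?_⟩
  have hmin : min c 1 * max ‖t‖ ‖s‖ ≤ c * max ‖t‖ ‖s‖ := by gcongr; exact min_le_left _ _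
  linarith [hsep t ht s hs, min_le_right c 1]

end Cones

theorem one_add_rpow_neg_add_le_mul {c d x y p q : ℝ} (hc : 0 < c) (hx : 0 ≤ x) (hy : 0 ≤ y)
    (hp : 0 ≤ p) (hq : 0 ≤ q) (h : c * (1 + max x y) ≤ 1 + d) :
    (1 + d) ^ (-(p + q)) ≤ (c * (1 + x)) ^ (-p) * (c * (1 + y)) ^ (-q) := by
  have hm : 0 < c * (1 + max x y) := by positivity
  calc (1 + d) ^ (-(p + q)) ≤ (c * (1 + max x y)) ^ (-(p + q)) :=
        Real.rpow_le_rpow_of_nonpos hm h (by linarith)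
    _ = (c * (1 + max x y)) ^ (-p) * (c * (1 + max x y)) ^ (-q) := by
        rw [neg_add, Real.rpow_add hm]
    _ ≤ (c * (1 + x)) ^ (-p) * (c * (1 + y)) ^ (-q) := by
        apply mul_le_mul _ _ (by positivity) (by positivity) <;>
          exact Real.rpow_le_rpow_of_nonpos (by positivity) (by gcongr; simp) (by linarith)

section Integrals

variable {X Y : Type*} [MeasurableSpace X] [MeasurableSpace Y] {μ : Measure X} {ν : Measure Y}

theorem setLIntegral_rpow_setLIntegral_le {A : Set X} {B : Set Y} (hA : MeasurableSet A)
    (hB : MeasurableSet B) {k : X → Y → ℝ≥0∞} {f : X → ℝ≥0∞} {g : Y → ℝ≥0∞}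
    (hf : Measurable f) (hg : Measurable g) (hk : ∀ t ∈ A, ∀ s ∈ B, k t s ≤ f t * g s)
    {r : ℝ} (hr : 0 ≤ r) :
    ∫⁻ t in A, (∫⁻ s in B, k t s ∂ν) ^ r ∂μ ≤ (∫⁻ t, f t ^ r ∂μ) * (∫⁻ s, g s ∂ν) ^ r := by
  have hinner : ∀ t ∈ A, ∫⁻ s in B, k t s ∂ν ≤ f t * ∫⁻ s, g s ∂ν := fun t ht =>
    calc ∫⁻ s in B, k t s ∂ν ≤ ∫⁻ s in B, f t * g s ∂ν := setLIntegral_mono' hB (hk t ht)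
      _ = f t * ∫⁻ s in B, g s ∂ν := lintegral_const_mul _ hg
      _ ≤ f t * ∫⁻ s, g s ∂ν := by gcongr; exact Measure.restrict_le_self
  calc ∫⁻ t in A, (∫⁻ s in B, k t s ∂ν) ^ r ∂μ
      ≤ ∫⁻ t in A, f t ^ r * (∫⁻ s, g s ∂ν) ^ r ∂μ := setLIntegral_mono' hA fun t ht => by
        rw [← ENNReal.mul_rpow_of_nonneg _ _ hr]
        exact ENNReal.rpow_le_rpow (hinner t ht) hr
    _ = (∫⁻ t in A, f t ^ r ∂μ) * (∫⁻ s, g s ∂ν) ^ r := lintegral_mul_const _ (hf.pow_const r)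
    _ ≤ (∫⁻ t, f t ^ r ∂μ) * (∫⁻ s, g s ∂ν) ^ r := by gcongr; exact Measure.restrict_le_self

end Integrals

section HaarMeasure

variable {V : Type*} [NormedAddCommGroup V] [NormedSpace ℝ V] [FiniteDimensional ℝ V]
  [MeasurableSpace V] [BorelSpace V] (μ : Measure V) [μ.IsAddHaarMeasure]

theorem lintegral_mul_one_add_norm_rpow_neg_lt_top {c r : ℝ} (hc : 0 < c)
    (hr : (finrank ℝ V : ℝ) < r) :
    ∫⁻ x, ENNReal.ofReal ((c * (1 + ‖x‖)) ^ (-r)) ∂μ < ∞ := by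
  have hsplit : ∀ x : V, ENNReal.ofReal ((c * (1 + ‖x‖)) ^ (-r)) =
      ENNReal.ofReal (c ^ (-r)) * ENNReal.ofReal ((1 + ‖x‖) ^ (-r)) := fun x => by
    rw [Real.mul_rpow hc.le (by positivity), ENNReal.ofReal_mul (by positivity)]
  rw [lintegral_congr hsplit, lintegral_const_mul _ (by fun_prop)]
  exact ENNReal.mul_lt_top ENNReal.ofReal_lt_top (finite_integral_one_add_norm hr)

theorem lintegral_cone_rpow_lintegral_cone_lt_top {K₁ K₂ : Set V}
    (hc₁ : IsClosed K₁) (hs₁ : ∀ x ∈ K₁, ∀ l : ℝ, 0 ≤ l → l • x ∈ K₁)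
    (hc₂ : IsClosed K₂) (hs₂ : ∀ x ∈ K₂, ∀ l : ℝ, 0 ≤ l → l • x ∈ K₂)
    (hK : K₁ ∩ K₂ = {0}) {α : ℝ} (hα : 3 * (finrank ℝ V : ℝ) < α) :
    ∫⁻ t in K₁, (∫⁻ s in K₂, ENNReal.ofReal ((1 + ‖t - s‖) ^ (-α)) ∂μ) ^ (1 / 2 : ℝ) ∂μ < ⊤ := by
  obtain ⟨c, hc, hsep⟩ :=
    exists_pos_mul_one_add_max_norm_le_one_add_norm_sub hc₁ hs₁ hc₂ hs₂ hK
  set d : ℝ := (finrank ℝ V : ℝ)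
  set ε := (α - 3 * d) / 3
  have hε : 0 < ε := by positivity
  have hkernel : ∀ t ∈ K₁, ∀ s ∈ K₂, ENNReal.ofReal ((1 + ‖t - s‖) ^ (-α)) ≤
      ENNReal.ofReal ((c * (1 + ‖t‖)) ^ (-(2 * d + 2 * ε))) *
        ENNReal.ofReal ((c * (1 + ‖s‖)) ^ (-(d + ε))) := fun t ht s hs => by
    rw [← ENNReal.ofReal_mul (by positivity), show α = 2 * d + 2 * ε + (d + ε) by ring]
    exact ENNReal.ofReal_le_ofReal <| one_add_rpow_neg_add_le_mul hc (norm_nonneg t)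
      (norm_nonneg s) (by positivity) (by positivity) (hsep t ht s hs)
  have hsqrt : ∀ t : V, ENNReal.ofReal ((c * (1 + ‖t‖)) ^ (-(2 * d + 2 * ε))) ^ (1 / 2 : ℝ) =
      ENNReal.ofReal ((c * (1 + ‖t‖)) ^ (-(d + ε))) := fun t => by
    rw [ENNReal.ofReal_rpow_of_nonneg (by positivity) (by norm_num),
      ← Real.rpow_mul (by positivity)]
    ring_nf
  calc _ ≤ (∫⁻ t, ENNReal.ofReal ((c * (1 + ‖t‖)) ^ (-(2 * d + 2 * ε))) ^ (1 / 2 : ℝ) ∂μ) *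
        (∫⁻ s, ENNReal.ofReal ((c * (1 + ‖s‖)) ^ (-(d + ε))) ∂μ) ^ (1 / 2 : ℝ) :=
        setLIntegral_rpow_setLIntegral_le hc₁.measurableSet hc₂.measurableSet
          (by fun_prop) (by fun_prop) hkernel (by norm_num)
    _ < ⊤ := by
      have hfin := lintegral_mul_one_add_norm_rpow_neg_lt_top μ hc (r := d + ε) (by linarith)
      simp_rw [hsqrt]
      exact ENNReal.mul_lt_top hfin (ENNReal.rpow_lt_top_of_nonneg (by norm_num) hfin.ne)

end HaarMeasure

/-- Let `K₁, K₂ ⊆ ℝ²` be closed cones with `K₁ ∩ K₂ = {0}`.  Then for every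
`α > 6`, `∫_{K₁} √(∫_{K₂} (1+|t−s|)^{−α} ds) dt < ∞`. -/
theorem stmt8 (K₁ K₂ : Set (EuclideanSpace ℝ (Fin 2)))
    (h₁ : IsClosedCone K₁) (h₂ : IsClosedCone K₂) (hK : K₁ ∩ K₂ = {0})
    (α : ℝ) (hα : 6 < α) :
    ∫⁻ t in K₁, (∫⁻ s in K₂, ENNReal.ofReal ((1 + ‖t - s‖) ^ (-α))) ^ (1 / 2 : ℝ) < ⊤ :=
  lintegral_cone_rpow_lintegral_cone_lt_top volume h₁.1 h₁.2 h₂.1 h₂.2 hK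
    (by rw [finrank_euclideanSpace_fin]; norm_num; linarith)
end

section
/- Let K₁, K₂ ⊆ ℝ² be closed cones with K₁ ∩ K₂ = {0}, each of positive Lebesgue measure, and let 0 < α ≤ 6. Then ∫_{K₁} √( ∫_{K₂} (1+|t−s|)^{−α} ds ) dt = ∞, where both integrals are with respect to Lebesgue measure on ℝ². -/
/-!
Work in dimension `d` with `α ≤ 3d` (for `d = 2` this is `α ≤ 6`). For `‖t‖ ≥ 1` the kernel
`(1 + ‖t - s‖)^(-α)` is at least `(3‖t‖)^(-3d)` on the part of `K₂` inside the ball of radius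
`‖t‖`, a set of measure `≍ ‖t‖^d` by homogeneity; so the square root of the inner integral is
`≳ ‖t‖^(-d)`. Again by homogeneity, every dyadic annulus `2ⁿ ≤ ‖t‖ < 2ⁿ⁺¹` of `K₁` carries the
same positive mass of `‖t‖^(-d)`, so the outer integral diverges.
-/

open MeasureTheory
open scoped ENNReal

open Metric Module Set
open scoped Pointwise

lemma inv_pow_le_rpow_neg {a b α : ℝ} {N : ℕ} (hα : α ≤ N) (ha : 1 ≤ a) (hab : a ≤ b) :
    (b ^ N)⁻¹ ≤ a ^ (-α) :=
  calc (b ^ N)⁻¹ ≤ (a ^ N)⁻¹ := by gcongr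
    _ = a ^ (-(N : ℝ)) := by rw [Real.rpow_neg (by linarith), Real.rpow_natCast]
    _ ≤ a ^ (-α) := Real.rpow_le_rpow_of_exponent_le ha (by linarith)

section Cone

variable {E : Type*} [NormedAddCommGroup E] [NormedSpace ℝ E] {K : Set E}

lemma smul_set_eq_of_cone (hK : ∀ x ∈ K, ∀ l : ℝ, 0 < l → l • x ∈ K) {r : ℝ} (hr : 0 < r) :
    r • K = K := by
  refine (smul_set_subset_iff.2 fun x hx ↦ hK x hx r hr).antisymm ?_
  rw [subset_smul_set_iff₀ hr.ne']
  exact smul_set_subset_iff.2 fun x hx ↦ hK x hx r⁻¹ (inv_pos.2 hr)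

lemma cone_inter_ball_eq_smul (hK : ∀ x ∈ K, ∀ l : ℝ, 0 < l → l • x ∈ K) {r : ℝ} (hr : 0 < r) :
    K ∩ ball 0 r = r • (K ∩ ball 0 1) := by
  rw [smul_set_inter₀ hr.ne', smul_set_eq_of_cone hK hr, smul_unitBall hr.ne',
    Real.norm_of_nonneg hr.le]

variable [MeasurableSpace E] [BorelSpace E] [FiniteDimensional ℝ E]
  (μ : Measure E) [μ.IsAddHaarMeasure]

lemma measure_cone_inter_ball (hK : ∀ x ∈ K, ∀ l : ℝ, 0 < l → l • x ∈ K) {r : ℝ} (hr : 0 < r) :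
    μ (K ∩ ball 0 r) = ENNReal.ofReal (r ^ finrank ℝ E) * μ (K ∩ ball 0 1) := by
  rw [cone_inter_ball_eq_smul hK hr, Measure.addHaar_smul_of_nonneg μ hr.le]

lemma measure_cone_inter_ball_one_pos (hK : ∀ x ∈ K, ∀ l : ℝ, 0 < l → l • x ∈ K)
    (hμK : 0 < μ K) : 0 < μ (K ∩ ball 0 1) := by
  refine pos_of_ne_zero fun h ↦ hμK.ne' ?_
  rw [← inter_univ K, ← iUnion_ball_nat_succ 0, inter_iUnion, measure_iUnion_null_iff]
  intro n
  rw [measure_cone_inter_ball μ hK n.cast_add_one_pos, h, mul_zero]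

lemma le_measure_cone_inter_annulus (hK : ∀ x ∈ K, ∀ l : ℝ, 0 < l → l • x ∈ K)
    {r : ℝ} (hr : 0 < r) :
    ENNReal.ofReal ((2 ^ finrank ℝ E - 1) * r ^ finrank ℝ E) * μ (K ∩ ball 0 1)
      ≤ μ (K ∩ (ball 0 (2 * r) \ ball 0 r)) := by
  calc ENNReal.ofReal ((2 ^ finrank ℝ E - 1) * r ^ finrank ℝ E) * μ (K ∩ ball 0 1)
      = μ (K ∩ ball 0 (2 * r)) - μ (K ∩ ball 0 r) := by
        rw [measure_cone_inter_ball μ hK (r := 2 * r) (by positivity),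
          measure_cone_inter_ball μ hK hr,
          ← ENNReal.sub_mul fun _ _ ↦
            (measure_inter_lt_top_of_right_ne_top measure_ball_lt_top.ne).ne,
          ← ENNReal.ofReal_sub _ (by positivity)]
        ring_nf
    _ ≤ μ (K ∩ (ball 0 (2 * r) \ ball 0 r)) := by
        rw [inter_sdiff_distrib_left]
        exact le_measure_sdiff

lemma le_setLIntegral_cone_inter_annulus (hK : ∀ x ∈ K, ∀ l : ℝ, 0 < l → l • x ∈ K)
    {r : ℝ} (hr : 0 < r) :
    ENNReal.ofReal ((2 ^ finrank ℝ E - 1) / 2 ^ finrank ℝ E) * μ (K ∩ ball 0 1)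
      ≤ ∫⁻ t in K ∩ (ball 0 (2 * r) \ ball 0 r), ENNReal.ofReal ((‖t‖ ^ finrank ℝ E)⁻¹) ∂μ := by
  set d := finrank ℝ E
  calc ENNReal.ofReal ((2 ^ d - 1) / 2 ^ d) * μ (K ∩ ball 0 1)
      = ENNReal.ofReal (((2 * r) ^ d)⁻¹)
          * (ENNReal.ofReal ((2 ^ d - 1) * r ^ d) * μ (K ∩ ball 0 1)) := by
        rw [← mul_assoc, ← ENNReal.ofReal_mul (by positivity)]
        congr 2
        field_simp
        ring
    _ ≤ ENNReal.ofReal (((2 * r) ^ d)⁻¹) * μ (K ∩ (ball 0 (2 * r) \ ball 0 r)) := by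
        gcongr
        exact le_measure_cone_inter_annulus μ hK hr
    _ = ∫⁻ _ in K ∩ (ball 0 (2 * r) \ ball 0 r), ENNReal.ofReal (((2 * r) ^ d)⁻¹) ∂μ :=
        (setLIntegral_const _ _).symm
    _ ≤ _ := by
        refine setLIntegral_mono (by fun_prop) fun t ⟨_, ht_lt, ht_ge⟩ ↦ ?_
        rw [mem_ball_zero_iff] at ht_lt
        rw [mem_ball_zero_iff, not_lt] at ht_ge
        have := hr.trans_le ht_ge
        gcongr

lemma setLIntegral_cone_sdiff_ball_inv_norm_pow_eq_top [Nontrivial E] (hKm : MeasurableSet K)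
    (hK : ∀ x ∈ K, ∀ l : ℝ, 0 < l → l • x ∈ K) (hμK : 0 < μ K) :
    ∫⁻ t in K \ ball 0 1, ENNReal.ofReal ((‖t‖ ^ finrank ℝ E)⁻¹) ∂μ = ∞ := by
  set d := finrank ℝ E
  set A : ℕ → Set E := fun n ↦ K ∩ (ball 0 (2 * 2 ^ n) \ ball 0 (2 ^ n))
  have hA_disj : Pairwise (Function.onFun Disjoint A) := by
    refine (pairwise_disjoint_on A).2 fun m n hmn ↦ disjoint_left.2 ?_
    rintro t ⟨-, htm, -⟩ ⟨-, -, htn⟩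
    have : (2 : ℝ) * 2 ^ m ≤ 2 ^ n := by rw [← pow_succ']; gcongr <;> norm_num; omega
    exact htn (ball_subset_ball this htm)
  have hA_sub : ⋃ n, A n ⊆ K \ ball 0 1 := iUnion_subset fun _ t ht ↦
    ⟨ht.1, fun ht1 ↦ ht.2.2 (ball_subset_ball (one_le_pow₀ one_le_two) ht1)⟩
  have hc : ENNReal.ofReal ((2 ^ d - 1) / 2 ^ d) * μ (K ∩ ball 0 1) ≠ 0 := by
    have : (1 : ℝ) < 2 ^ d := one_lt_pow₀ one_lt_two finrank_pos.ne'
    refine mul_ne_zero ?_ (measure_cone_inter_ball_one_pos μ hK hμK).ne'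
    exact (ENNReal.ofReal_pos.2 (by apply div_pos <;> linarith)).ne'
  refine eq_top_iff.2 ?_
  calc ∞ = ∑' _ : ℕ, ENNReal.ofReal ((2 ^ d - 1) / 2 ^ d) * μ (K ∩ ball 0 1) :=
        (ENNReal.tsum_const_eq_top_of_ne_zero hc).symm
    _ ≤ ∑' n, ∫⁻ t in A n, ENNReal.ofReal ((‖t‖ ^ d)⁻¹) ∂μ :=
        ENNReal.tsum_le_tsum fun n ↦ le_setLIntegral_cone_inter_annulus μ hK (by positivity)
    _ = ∫⁻ t in ⋃ n, A n, ENNReal.ofReal ((‖t‖ ^ d)⁻¹) ∂μ :=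
        (lintegral_iUnion (fun n ↦ hKm.inter (measurableSet_ball.diff measurableSet_ball))
          hA_disj _).symm
    _ ≤ _ := lintegral_mono_set hA_sub

lemma le_setLIntegral_cone_one_add_norm_sub_rpow_neg (hKm : MeasurableSet K)
    (hK : ∀ x ∈ K, ∀ l : ℝ, 0 < l → l • x ∈ K) {α : ℝ} (hα : α ≤ 3 * finrank ℝ E)
    {t : E} (ht : 1 ≤ ‖t‖) :
    ENNReal.ofReal ((3 ^ (3 * finrank ℝ E))⁻¹) * ENNReal.ofReal ((‖t‖ ^ finrank ℝ E)⁻¹) ^ 2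
        * μ (K ∩ ball 0 1)
      ≤ ∫⁻ s in K, ENNReal.ofReal ((1 + ‖t - s‖) ^ (-α)) ∂μ := by
  set d := finrank ℝ E
  have ht0 : 0 < ‖t‖ := one_pos.trans_le ht
  calc ENNReal.ofReal ((3 ^ (3 * d))⁻¹) * ENNReal.ofReal ((‖t‖ ^ d)⁻¹) ^ 2 * μ (K ∩ ball 0 1)
      = ENNReal.ofReal (((3 * ‖t‖) ^ (3 * d))⁻¹)
          * (ENNReal.ofReal (‖t‖ ^ d) * μ (K ∩ ball 0 1)) := by
        rw [← ENNReal.ofReal_pow (by positivity), ← ENNReal.ofReal_mul (by positivity),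
          ← mul_assoc, ← ENNReal.ofReal_mul (by positivity)]
        congr 2
        field_simp
        ring
    _ = ∫⁻ _ in K ∩ ball 0 ‖t‖, ENNReal.ofReal (((3 * ‖t‖) ^ (3 * d))⁻¹) ∂μ := by
        rw [setLIntegral_const, measure_cone_inter_ball μ hK ht0]
    _ ≤ ∫⁻ s in K ∩ ball 0 ‖t‖, ENNReal.ofReal ((1 + ‖t - s‖) ^ (-α)) ∂μ := by
        refine setLIntegral_mono' (hKm.inter measurableSet_ball) fun s ⟨_, hs⟩ ↦ ?_
        rw [mem_ball_zero_iff] at hs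
        refine ENNReal.ofReal_le_ofReal (inv_pow_le_rpow_neg (by push_cast; exact hα) ?_ ?_)
        · linarith [norm_nonneg (t - s)]
        · linarith [norm_sub_le t s]
    _ ≤ ∫⁻ s in K, ENNReal.ofReal ((1 + ‖t - s‖) ^ (-α)) ∂μ :=
        lintegral_mono_set inter_subset_left

theorem setLIntegral_cone_rpow_setLIntegral_cone_eq_top [Nontrivial E] {K₁ K₂ : Set E}
    (hK₁m : MeasurableSet K₁) (hK₁ : ∀ x ∈ K₁, ∀ l : ℝ, 0 < l → l • x ∈ K₁)
    (hK₂m : MeasurableSet K₂) (hK₂ : ∀ x ∈ K₂, ∀ l : ℝ, 0 < l → l • x ∈ K₂)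
    (hμ₁ : 0 < μ K₁) (hμ₂ : 0 < μ K₂) {α : ℝ} (hα : α ≤ 3 * finrank ℝ E) :
    ∫⁻ t in K₁, (∫⁻ s in K₂, ENNReal.ofReal ((1 + ‖t - s‖) ^ (-α)) ∂μ) ^ (1 / 2 : ℝ) ∂μ = ∞ := by
  set d := finrank ℝ E
  set c := (ENNReal.ofReal ((3 ^ (3 * d))⁻¹) * μ (K₂ ∩ ball 0 1)) ^ (1 / 2 : ℝ)
  have hc : c ≠ 0 := by
    refine (ENNReal.rpow_pos (ENNReal.mul_pos ?_ (measure_cone_inter_ball_one_pos μ hK₂ hμ₂).ne')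
      (ENNReal.mul_ne_top ENNReal.ofReal_ne_top ?_)).ne'
    · exact (ENNReal.ofReal_pos.2 (by positivity)).ne'
    · exact (measure_inter_lt_top_of_right_ne_top measure_ball_lt_top.ne).ne
  have h_pointwise : ∀ t ∈ K₁ \ ball 0 1, c * ENNReal.ofReal ((‖t‖ ^ d)⁻¹)
      ≤ (∫⁻ s in K₂, ENNReal.ofReal ((1 + ‖t - s‖) ^ (-α)) ∂μ) ^ (1 / 2 : ℝ) := by
    rintro t ⟨-, ht⟩
    rw [mem_ball_zero_iff, not_lt] at ht
    calc c * ENNReal.ofReal ((‖t‖ ^ d)⁻¹)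
        = (ENNReal.ofReal ((3 ^ (3 * d))⁻¹) * ENNReal.ofReal ((‖t‖ ^ d)⁻¹) ^ 2
            * μ (K₂ ∩ ball 0 1)) ^ (1 / 2 : ℝ) := by
          have h_sqrt_sq : ∀ x : ℝ≥0∞, (x ^ 2) ^ (1 / 2 : ℝ) = x := fun x ↦ by
            simpa [one_div] using ENNReal.pow_rpow_inv_natCast two_ne_zero x
          rw [mul_right_comm, ENNReal.mul_rpow_of_nonneg _ _ (by norm_num), h_sqrt_sq]
      _ ≤ _ := by
          gcongr
          exact le_setLIntegral_cone_one_add_norm_sub_rpow_neg μ hK₂m hK₂ hα ht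
  refine eq_top_iff.2 ?_
  calc ∞ = c * ∫⁻ t in K₁ \ ball 0 1, ENNReal.ofReal ((‖t‖ ^ d)⁻¹) ∂μ := by
        rw [setLIntegral_cone_sdiff_ball_inv_norm_pow_eq_top μ hK₁m hK₁ hμ₁, ENNReal.mul_top hc]
    _ ≤ ∫⁻ t in K₁ \ ball 0 1, c * ENNReal.ofReal ((‖t‖ ^ d)⁻¹) ∂μ :=
        lintegral_const_mul_le _ _
    _ ≤ _ := setLIntegral_mono' (hK₁m.diff measurableSet_ball) h_pointwise
    _ ≤ _ := lintegral_mono_set sdiff_subset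

end Cone

theorem stmt9_general (K₁ K₂ : Set (EuclideanSpace ℝ (Fin 2)))
    (h₁ : IsClosedCone K₁) (h₂ : IsClosedCone K₂)
    (hm₁ : 0 < volume K₁) (hm₂ : 0 < volume K₂)
    (α : ℝ) (hα : α ≤ 6) :
    ∫⁻ t in K₁, (∫⁻ s in K₂, ENNReal.ofReal ((1 + ‖t - s‖) ^ (-α))) ^ (1 / 2 : ℝ) = ⊤ :=
  setLIntegral_cone_rpow_setLIntegral_cone_eq_top volume h₁.1.measurableSet
    (fun x hx l hl ↦ h₁.2 x hx l hl.le) h₂.1.measurableSet (fun x hx l hl ↦ h₂.2 x hx l hl.le)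
    hm₁ hm₂ (by rw [finrank_euclideanSpace_fin]; norm_num; linarith)

/-- Let `K₁, K₂ ⊆ ℝ²` be closed cones with `K₁ ∩ K₂ = {0}`, each of positive
Lebesgue measure, and let `0 < α ≤ 6`.  Then
`∫_{K₁} √(∫_{K₂} (1+|t−s|)^{−α} ds) dt = ∞`. -/
theorem stmt9 (K₁ K₂ : Set (EuclideanSpace ℝ (Fin 2)))
    (h₁ : IsClosedCone K₁) (h₂ : IsClosedCone K₂) (hK : K₁ ∩ K₂ = {0})
    (hm₁ : 0 < volume K₁) (hm₂ : 0 < volume K₂)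
    (α : ℝ) (hα0 : 0 < α) (hα : α ≤ 6) :
    ∫⁻ t in K₁, (∫⁻ s in K₂, ENNReal.ofReal ((1 + ‖t - s‖) ^ (-α))) ^ (1 / 2 : ℝ) = ⊤ :=
  stmt9_general K₁ K₂ h₁ h₂ hm₁ hm₂ α hα
end

section
/- Let K₁, K₂ ⊆ ℝ² be closed cones with K₁ ∩ K₂ = {0}, and let δ > 0. Then for every α > 2(1 + 2/δ), ∫_{K₁} ( ∫_{K₂} (1+|t−s|)^{−α} ds )^{δ/2} dt < ∞, where both integrals are with respect to Lebesgue measure on ℝ². -/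
/-!
Since `K₁ ∩ K₂ = {0}`, compactness of `K₁ ∩ S¹` gives `c > 0` with `c‖t‖ ≤ ‖t - s‖` for
`t ∈ K₁`, `s ∈ K₂`; we may take `c ≤ 1`. Split `α = β + γ` with `γ > d` and `βδ/2 > d`
(`d` the dimension), which is possible exactly when `α > d(1 + 2/δ)`. Then
`(1 + ‖t - s‖)^(-α) ≤ (c(1 + ‖t‖))^(-β) (1 + ‖t - s‖)^(-γ)`, so the inner integral is
`O((1 + ‖t‖)^(-β))` and the outer integrand `O((1 + ‖t‖)^(-βδ/2))`, which is integrable.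
-/

open MeasureTheory
open scoped ENNReal

open Metric Module

variable {E : Type*} [NormedAddCommGroup E]

theorem exists_pos_mul_norm_le_norm_sub_of_cone [NormedSpace ℝ E] [ProperSpace E] {K₁ K₂ : Set E}
    (hK₁ : IsClosed K₁) (hK₂ : IsClosed K₂)
    (hsmul₁ : ∀ x ∈ K₁, ∀ l : ℝ, 0 < l → l • x ∈ K₁)
    (hsmul₂ : ∀ x ∈ K₂, ∀ l : ℝ, 0 < l → l • x ∈ K₂) (hK : K₁ ∩ K₂ ⊆ {0}) :
    ∃ c > 0, ∀ t ∈ K₁, ∀ s ∈ K₂, c * ‖t‖ ≤ ‖t - s‖ := by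
  have hdisj : Disjoint (K₁ ∩ sphere 0 1) K₂ := by
    refine Set.disjoint_left.2 fun u ⟨hu₁, hu⟩ hu₂ => ?_
    rw [hK ⟨hu₁, hu₂⟩] at hu
    simp at hu
  obtain ⟨r, hr, hsep⟩ :=
    exists_pos_forall_lt_edist ((isCompact_sphere 0 1).inter_left hK₁) hK₂ hdisj
  refine ⟨r, hr, fun t ht s hs => ?_⟩
  rcases eq_or_ne t 0 with rfl | ht0
  · simp
  have hnt : 0 < ‖t‖ := norm_pos_iff.2 ht0
  have hunit : ‖t‖⁻¹ • t ∈ K₁ ∩ sphere 0 1 :=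
    ⟨hsmul₁ t ht _ (inv_pos.2 hnt), by simp [norm_smul, hnt.ne']⟩
  have hlt := hsep _ hunit _ (hsmul₂ s hs _ (inv_pos.2 hnt))
  rw [edist_nndist, ENNReal.coe_lt_coe, ← NNReal.coe_lt_coe, coe_nndist,
    dist_smul₀, dist_eq_norm, Real.norm_of_nonneg (inv_nonneg.2 hnt.le), lt_inv_mul_iff₀ hnt] at hlt
  linarith

lemma rpow_neg_add_le_of_le {a b β γ : ℝ} (ha : 0 < a) (hab : a ≤ b) (hβ : 0 ≤ β) :
    b ^ (-(β + γ)) ≤ a ^ (-β) * b ^ (-γ) := by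
  rw [neg_add, Real.rpow_add (ha.trans_le hab)]
  exact mul_le_mul_of_nonneg_right (Real.rpow_le_rpow_of_nonpos ha hab (neg_nonpos.2 hβ))
    (Real.rpow_nonneg (ha.trans_le hab).le _)

lemma exists_add_eq_of_mul_one_add_two_div_lt {d δ α : ℝ} (hd : 0 ≤ d) (hδ : 0 < δ)
    (hα : d * (1 + 2 / δ) < α) :
    ∃ β γ, 0 ≤ β ∧ d < γ ∧ d < β * (δ / 2) ∧ α = β + γ := by
  set ε := (α - d * (1 + 2 / δ)) / 2
  have hε : 0 < ε := by simp only [ε]; linarith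
  refine ⟨2 * d / δ + ε, d + ε, by positivity, by linarith, ?_, ?_⟩
  · field_simp
    nlinarith
  · simp only [ε]; field_simp; ring

variable [MeasurableSpace E] [BorelSpace E]

theorem setLIntegral_one_add_norm_sub_rpow_le (μ : Measure E) [μ.IsAddRightInvariant]
    {K : Set E} {t : E} {a β γ : ℝ} (ha : 0 < a) (hK : ∀ s ∈ K, a ≤ 1 + ‖t - s‖) (hβ : 0 ≤ β) :
    ∫⁻ s in K, ENNReal.ofReal ((1 + ‖t - s‖) ^ (-(β + γ))) ∂μ ≤
      ENNReal.ofReal (a ^ (-β)) * ∫⁻ s, ENNReal.ofReal ((1 + ‖s‖) ^ (-γ)) ∂μ :=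
  calc ∫⁻ s in K, ENNReal.ofReal ((1 + ‖t - s‖) ^ (-(β + γ))) ∂μ
      ≤ ∫⁻ s in K, ENNReal.ofReal (a ^ (-β)) * ENNReal.ofReal ((1 + ‖s - t‖) ^ (-γ)) ∂μ :=
        setLIntegral_mono (by fun_prop) fun s hs => by
          rw [← ENNReal.ofReal_mul (by positivity), norm_sub_rev s t]
          exact ENNReal.ofReal_le_ofReal (rpow_neg_add_le_of_le ha (hK s hs) hβ)
    _ ≤ ∫⁻ s, ENNReal.ofReal (a ^ (-β)) * ENNReal.ofReal ((1 + ‖s - t‖) ^ (-γ)) ∂μ :=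
        setLIntegral_le_lintegral _ _
    _ = ENNReal.ofReal (a ^ (-β)) * ∫⁻ s, ENNReal.ofReal ((1 + ‖s‖) ^ (-γ)) ∂μ := by
        rw [lintegral_const_mul' _ _ ENNReal.ofReal_ne_top,
          lintegral_sub_right_eq_self (fun s => ENNReal.ofReal ((1 + ‖s‖) ^ (-γ))) t]

variable [NormedSpace ℝ E] [FiniteDimensional ℝ E] (μ : Measure E) [μ.IsAddHaarMeasure]

theorem lintegral_mul_one_add_norm_rpow_lt_top {c r : ℝ} (hc : 0 < c) (hr : finrank ℝ E < r) :
    ∫⁻ t, ENNReal.ofReal ((c * (1 + ‖t‖)) ^ (-r)) ∂μ < ⊤ := by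
  have hsplit (t : E) : ENNReal.ofReal ((c * (1 + ‖t‖)) ^ (-r)) =
      ENNReal.ofReal (c ^ (-r)) * ENNReal.ofReal ((1 + ‖t‖) ^ (-r)) := by
    rw [Real.mul_rpow hc.le (by positivity), ENNReal.ofReal_mul (by positivity)]
  simp_rw [hsplit, lintegral_const_mul' _ _ ENNReal.ofReal_ne_top]
  exact ENNReal.mul_lt_top ENNReal.ofReal_lt_top (finite_integral_one_add_norm hr)

theorem setLIntegral_rpow_setLIntegral_one_add_norm_sub_rpow_lt_top {K₁ K₂ : Set E} {c : ℝ}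
    (hc : 0 < c) (hsep : ∀ t ∈ K₁, ∀ s ∈ K₂, c * ‖t‖ ≤ ‖t - s‖) {δ α : ℝ} (hδ : 0 < δ)
    (hα : finrank ℝ E * (1 + 2 / δ) < α) :
    ∫⁻ t in K₁, (∫⁻ s in K₂, ENNReal.ofReal ((1 + ‖t - s‖) ^ (-α)) ∂μ) ^ (δ / 2) ∂μ < ⊤ := by
  obtain ⟨β, γ, hβ, hγ, hβδ, rfl⟩ :=
    exists_add_eq_of_mul_one_add_two_div_lt (Nat.cast_nonneg _) hδ hα
  have hc' : 0 < min c 1 := lt_min hc one_pos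
  have hsep' : ∀ t ∈ K₁, ∀ s ∈ K₂, min c 1 * (1 + ‖t‖) ≤ 1 + ‖t - s‖ := fun t ht s hs => by
    have := hsep t ht s hs
    nlinarith [min_le_left c 1, min_le_right c 1, norm_nonneg t]
  set C := ∫⁻ s, ENNReal.ofReal ((1 + ‖s‖) ^ (-γ)) ∂μ
  have hC : C ^ (δ / 2) ≠ ⊤ :=
    ENNReal.rpow_ne_top_of_nonneg (by positivity) (finite_integral_one_add_norm hγ).ne
  calc ∫⁻ t in K₁, (∫⁻ s in K₂, ENNReal.ofReal ((1 + ‖t - s‖) ^ (-(β + γ))) ∂μ) ^ (δ / 2) ∂μ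
      ≤ ∫⁻ t in K₁, ENNReal.ofReal ((min c 1 * (1 + ‖t‖)) ^ (-(β * (δ / 2)))) * C ^ (δ / 2) ∂μ :=
        setLIntegral_mono (by fun_prop) fun t ht => by
          have hpos : 0 < min c 1 * (1 + ‖t‖) := by positivity
          calc _ ≤ (ENNReal.ofReal ((min c 1 * (1 + ‖t‖)) ^ (-β)) * C) ^ (δ / 2) := by
                gcongr
                exact setLIntegral_one_add_norm_sub_rpow_le μ hpos (hsep' t ht) hβ
            _ = _ := by
                rw [ENNReal.mul_rpow_of_nonneg _ _ (by positivity),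
                  ENNReal.ofReal_rpow_of_nonneg (by positivity) (by positivity),
                  ← Real.rpow_mul hpos.le, neg_mul]
    _ ≤ ∫⁻ t, ENNReal.ofReal ((min c 1 * (1 + ‖t‖)) ^ (-(β * (δ / 2)))) * C ^ (δ / 2) ∂μ :=
        setLIntegral_le_lintegral _ _
    _ < ⊤ := by
        rw [lintegral_mul_const' _ _ hC]
        exact ENNReal.mul_lt_top (lintegral_mul_one_add_norm_rpow_lt_top μ hc' hβδ) hC.lt_top

/-- Let `K₁, K₂ ⊆ ℝ²` be closed cones with `K₁ ∩ K₂ = {0}` and let `δ > 0`.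
Then for every `α > 2(1 + 2/δ)`,
`∫_{K₁} (∫_{K₂} (1+|t−s|)^{−α} ds)^{δ/2} dt < ∞`. -/
theorem stmt10 (K₁ K₂ : Set (EuclideanSpace ℝ (Fin 2)))
    (h₁ : IsClosedCone K₁) (h₂ : IsClosedCone K₂) (hK : K₁ ∩ K₂ = {0})
    (δ : ℝ) (hδ : 0 < δ) (α : ℝ) (hα : 2 * (1 + 2 / δ) < α) :
    ∫⁻ t in K₁, (∫⁻ s in K₂, ENNReal.ofReal ((1 + ‖t - s‖) ^ (-α))) ^ (δ / 2) < ⊤ := by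
  obtain ⟨c, hc, hsep⟩ := exists_pos_mul_norm_le_norm_sub_of_cone h₁.1 h₂.1
    (fun x hx l hl => h₁.2 x hx l hl.le) (fun x hx l hl => h₂.2 x hx l hl.le) hK.subset
  refine setLIntegral_rpow_setLIntegral_one_add_norm_sub_rpow_lt_top volume hc hsep hδ ?_
  rwa [finrank_euclideanSpace_fin, Nat.cast_ofNat]
end

section
/- Let K₁, K₂ ⊆ ℝ² be closed cones with K₁ ∩ K₂ = {0}, and let δ > 0 and α > 2(1 + 2/δ). Then sup_{θ∈ℝ²} Σ_{t ∈ K₁ ∩ (ℤ²+θ)} ( ∫_{K₂} (1+|t−s|)^{−α} ds )^{δ/2} < ∞, where the sum runs over all points of the shifted integer lattice ℤ²+θ = {(k₁+θ₁, k₂+θ₂) : k₁,k₂ ∈ ℤ} lying in K₁, and the inner integral is with respect to Lebesgue measure on ℝ². -/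
/-!
The cones are closed and meet only at `0`, so compactness of the unit sphere of `ℝ² × ℝ²` gives
`c > 0` with `‖t - s‖ ≥ c ‖(t, s)‖` on `K₁ × K₂`. Splitting `α = (α - β) + β` with `β > 2` then
bounds the inner integral by `C (1 + c‖t‖)^(-(α - β))`, and `p = (α - β) δ / 2 > 2`. Since each
coordinate is at most the norm, `(1 + c‖k + θ‖)^(-p)` is at most the product of the
one-dimensional terms `(1 + c |kᵢ + θᵢ|)^(-p/2)`, and a one-dimensional sum is bounded uniformly
in `θᵢ` by recentring it at `⌊θᵢ⌋`, which costs only the factor `(1 + c)^(p/2)`.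
-/

open MeasureTheory
open scoped ENNReal

theorem Real.rpow_neg_add_le_mul_rpow_neg {x a b γ β : ℝ} (ha : 0 < a) (hb : 0 < b)
    (hax : a ≤ x) (hbx : b ≤ x) (hγ : 0 ≤ γ) (hβ : 0 ≤ β) :
    x ^ (-(γ + β)) ≤ a ^ (-γ) * b ^ (-β) := by
  rw [neg_add, Real.rpow_add (ha.trans_le hax)]
  exact mul_le_mul (Real.rpow_le_rpow_of_nonpos ha hax (by linarith))
    (Real.rpow_le_rpow_of_nonpos hb hbx (by linarith))
    (Real.rpow_nonneg (ha.trans_le hax).le _) (Real.rpow_nonneg ha.le _)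

theorem exists_mul_norm_prod_le_norm_sub {E : Type*} [NormedAddCommGroup E] [NormedSpace ℝ E]
    [ProperSpace E] {K₁ K₂ : Set E}
    (hK₁ : IsClosed K₁) (hK₂ : IsClosed K₂) (hsmul₁ : ∀ x ∈ K₁, ∀ l : ℝ, 0 ≤ l → l • x ∈ K₁)
    (hsmul₂ : ∀ x ∈ K₂, ∀ l : ℝ, 0 ≤ l → l • x ∈ K₂) (hK : K₁ ∩ K₂ = {0}) :
    ∃ c : ℝ, 0 < c ∧ c ≤ 1 ∧ ∀ t ∈ K₁, ∀ s ∈ K₂, c * ‖(t, s)‖ ≤ ‖t - s‖ := by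
  set S := K₁ ×ˢ K₂ ∩ Metric.sphere (0 : E × E) 1
  have hS : IsCompact S := (isCompact_sphere _ _).inter_left (hK₁.prod hK₂)
  have hpos : ∀ p ∈ S, 0 < ‖p.1 - p.2‖ := by
    rintro ⟨t, s⟩ ⟨⟨ht, hs⟩, hp⟩
    refine norm_pos_iff.2 (sub_ne_zero.2 fun (hts : t = s) => ?_)
    have h0 : t ∈ K₁ ∩ K₂ := ⟨ht, hts ▸ hs⟩
    rw [hK, Set.mem_singleton_iff] at h0
    subst hts h0
    simp at hp
  obtain ⟨c, hc, hcS⟩ := hS.exists_forall_le' (continuous_fst.sub continuous_snd).norm.continuousOn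
    hpos
  refine ⟨min c 1, lt_min hc one_pos, min_le_right _ _, fun t ht s hs => ?_⟩
  rcases eq_or_ne (t, s) 0 with h0 | h0
  · simp [h0]
  have hr : 0 < ‖(t, s)‖ := norm_pos_iff.2 h0
  have hmem : ‖(t, s)‖⁻¹ • (t, s) ∈ S := by
    refine ⟨⟨hsmul₁ t ht _ (inv_nonneg.2 hr.le), hsmul₂ s hs _ (inv_nonneg.2 hr.le)⟩, ?_⟩
    rw [mem_sphere_zero_iff_norm, norm_smul, norm_inv, norm_norm, inv_mul_cancel₀ hr.ne']
  have := hcS _ hmem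
  rw [Pi.sub_apply, Prod.smul_fst, Prod.smul_snd, ← smul_sub, norm_smul, norm_inv, norm_norm,
    inv_mul_eq_div, le_div_iff₀ hr] at this
  calc min c 1 * ‖(t, s)‖ ≤ c * ‖(t, s)‖ := by gcongr; exact min_le_left _ _
    _ ≤ ‖t - s‖ := this

theorem one_add_norm_sub_rpow_neg_le {E : Type*} [SeminormedAddCommGroup E] {c α β : ℝ} {t s : E}
    (hc : 0 < c) (hc1 : c ≤ 1) (hβ : 0 ≤ β) (hβα : β ≤ α)
    (hsep : c * ‖(t, s)‖ ≤ ‖t - s‖) :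
    (1 + ‖t - s‖) ^ (-α) ≤ c ^ (-β) * (1 + ‖s‖) ^ (-β) * (1 + c * ‖t‖) ^ (-(α - β)) := by
  have ht : c * ‖t‖ ≤ ‖t - s‖ := (mul_le_mul_of_nonneg_left (norm_fst_le _) hc.le).trans hsep
  have hs : c * ‖s‖ ≤ ‖t - s‖ := (mul_le_mul_of_nonneg_left (norm_snd_le _) hc.le).trans hsep
  have key := Real.rpow_neg_add_le_mul_rpow_neg (x := 1 + ‖t - s‖) (a := 1 + c * ‖t‖)
    (b := c * (1 + ‖s‖)) (by positivity) (by positivity) (by linarith) (by nlinarith)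
    (sub_nonneg.2 hβα) hβ
  rw [sub_add_cancel, Real.mul_rpow hc.le (by positivity)] at key
  linarith

theorem exists_setLIntegral_one_add_norm_sub_rpow_neg_le {E : Type*} [NormedAddCommGroup E]
    [NormedSpace ℝ E] [FiniteDimensional ℝ E] [MeasurableSpace E] [BorelSpace E]
    (μ : Measure E) [μ.IsAddHaarMeasure] (K : Set E) {c α β : ℝ} (hc : 0 < c) (hc1 : c ≤ 1)
    (hβ : (Module.finrank ℝ E : ℝ) < β) (hβα : β ≤ α) :
    ∃ C < ∞, ∀ t : E, (∀ s ∈ K, c * ‖(t, s)‖ ≤ ‖t - s‖) →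
      ∫⁻ s in K, ENNReal.ofReal ((1 + ‖t - s‖) ^ (-α)) ∂μ
        ≤ C * ENNReal.ofReal ((1 + c * ‖t‖) ^ (-(α - β))) := by
  have hβ0 : 0 ≤ β := (Nat.cast_nonneg _).trans hβ.le
  set I := ∫⁻ s, ENNReal.ofReal ((1 + ‖s‖) ^ (-β)) ∂μ
  refine ⟨ENNReal.ofReal (c ^ (-β)) * I,
    ENNReal.mul_lt_top ENNReal.ofReal_lt_top (finite_integral_one_add_norm hβ), fun t hsep => ?_⟩
  calc ∫⁻ s in K, ENNReal.ofReal ((1 + ‖t - s‖) ^ (-α)) ∂μ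
      ≤ ∫⁻ s in K, ENNReal.ofReal ((1 + c * ‖t‖) ^ (-(α - β))) *
          (ENNReal.ofReal (c ^ (-β)) * ENNReal.ofReal ((1 + ‖s‖) ^ (-β))) ∂μ := by
        refine setLIntegral_mono (by fun_prop) fun s hs => ?_
        rw [← ENNReal.ofReal_mul (by positivity), ← ENNReal.ofReal_mul (by positivity), mul_comm]
        exact ENNReal.ofReal_le_ofReal
          (one_add_norm_sub_rpow_neg_le hc hc1 hβ0 hβα (hsep s hs))
    _ ≤ ∫⁻ s, ENNReal.ofReal ((1 + c * ‖t‖) ^ (-(α - β))) *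
          (ENNReal.ofReal (c ^ (-β)) * ENNReal.ofReal ((1 + ‖s‖) ^ (-β))) ∂μ :=
        setLIntegral_le_lintegral _ _
    _ = ENNReal.ofReal (c ^ (-β)) * I * ENNReal.ofReal ((1 + c * ‖t‖) ^ (-(α - β))) := by
        rw [lintegral_const_mul' _ _ ENNReal.ofReal_ne_top,
          lintegral_const_mul' _ _ ENNReal.ofReal_ne_top, mul_comm]

theorem summable_one_add_mul_abs_int_rpow_neg {c q : ℝ} (hc : 0 < c) (hq : 1 < q) :
    Summable fun k : ℤ => (1 + c * |(k : ℝ)|) ^ (-q) := by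
  refine Summable.of_norm_bounded_eventually ((Real.summable_abs_int_rpow hq).mul_left (c ^ (-q)))
    ?_
  filter_upwards [(Set.finite_singleton (0 : ℤ)).compl_mem_cofinite] with k hk
  have hk : 0 < c * |(k : ℝ)| := mul_pos hc (abs_pos.2 (Int.cast_ne_zero.2 hk))
  rw [Real.norm_of_nonneg (by positivity), ← Real.mul_rpow hc.le (abs_nonneg _)]
  exact Real.rpow_le_rpow_of_nonpos hk (by linarith) (by linarith)

theorem exists_tsum_one_add_mul_abs_int_add_rpow_neg_le {c q : ℝ} (hc : 0 < c) (hq : 1 < q) :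
    ∃ J < ∞, ∀ θ : ℝ,
      ∑' k : ℤ, ENNReal.ofReal ((1 + c * |(k : ℝ) + θ|) ^ (-q)) ≤ J := by
  set f : ℤ → ℝ := fun m => (1 + c) ^ q * (1 + c * |(m : ℝ)|) ^ (-q)
  have hf : Summable f := (summable_one_add_mul_abs_int_rpow_neg hc hq).mul_left _
  refine ⟨∑' m, ENNReal.ofReal (f m), ?_, fun θ => ?_⟩
  · rw [← ENNReal.ofReal_tsum_of_nonneg (fun m => by positivity) hf]
    exact ENNReal.ofReal_lt_top
  rw [← (Equiv.addRight ⌊θ⌋).tsum_eq fun m => ENNReal.ofReal (f m)]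
  refine ENNReal.tsum_le_tsum fun k => ENNReal.ofReal_le_ofReal ?_
  have hfloor : |(k : ℝ) + ⌊θ⌋| ≤ |(k : ℝ) + θ| + 1 :=
    calc |(k : ℝ) + ⌊θ⌋| = |((k : ℝ) + θ) - Int.fract θ| := by rw [Int.fract]; ring_nf
      _ ≤ |(k : ℝ) + θ| + |Int.fract θ| := abs_sub _ _
      _ ≤ |(k : ℝ) + θ| + 1 := by
        rw [abs_of_nonneg (Int.fract_nonneg θ)]; linarith [Int.fract_lt_one θ]
  have hle : (1 + c * |(k : ℝ) + ⌊θ⌋|) / (1 + c) ≤ 1 + c * |(k : ℝ) + θ| := by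
    rw [div_le_iff₀ (by positivity)]
    nlinarith [mul_le_mul_of_nonneg_left hfloor hc.le, mul_nonneg hc.le (abs_nonneg ((k : ℝ) + θ))]
  calc (1 + c * |(k : ℝ) + θ|) ^ (-q) ≤ ((1 + c * |(k : ℝ) + ⌊θ⌋|) / (1 + c)) ^ (-q) :=
        Real.rpow_le_rpow_of_nonpos (by positivity) hle (by linarith)
    _ = f (Equiv.addRight ⌊θ⌋ k) := by
        simp only [f, Equiv.coe_addRight, Int.cast_add]
        rw [Real.div_rpow (by positivity) (by positivity),
          Real.rpow_neg (by positivity : 0 ≤ 1 + c), div_inv_eq_mul, mul_comm]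

theorem exists_tsum_one_add_mul_norm_int_prod_add_rpow_neg_le {c p : ℝ} (hc : 0 < c)
    (hp : 2 < p) :
    ∃ J < ∞, ∀ θ : ℝ × ℝ, ∑' k : ℤ × ℤ, ENNReal.ofReal ((1 + c *
      ‖(WithLp.equiv 2 (Fin 2 → ℝ)).symm ![(k.1 : ℝ) + θ.1, (k.2 : ℝ) + θ.2]‖) ^ (-p)) ≤ J := by
  obtain ⟨J, hJ, hJθ⟩ := exists_tsum_one_add_mul_abs_int_add_rpow_neg_le hc
    (by linarith : 1 < p / 2)
  refine ⟨J * J, ENNReal.mul_lt_top hJ hJ, fun θ => ?_⟩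
  calc _ ≤ ∑' k : ℤ × ℤ, ENNReal.ofReal ((1 + c * |(k.1 : ℝ) + θ.1|) ^ (-(p / 2))) *
        ENNReal.ofReal ((1 + c * |(k.2 : ℝ) + θ.2|) ^ (-(p / 2))) := by
        refine ENNReal.tsum_le_tsum fun k => ?_
        set x := (WithLp.equiv 2 (Fin 2 → ℝ)).symm ![(k.1 : ℝ) + θ.1, (k.2 : ℝ) + θ.2]
        have h₁ : |(k.1 : ℝ) + θ.1| ≤ ‖x‖ := by simpa [x] using PiLp.norm_apply_le x 0
        have h₂ : |(k.2 : ℝ) + θ.2| ≤ ‖x‖ := by simpa [x] using PiLp.norm_apply_le x 1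
        have key := Real.rpow_neg_add_le_mul_rpow_neg (x := 1 + c * ‖x‖)
          (a := 1 + c * |(k.1 : ℝ) + θ.1|) (b := 1 + c * |(k.2 : ℝ) + θ.2|)
          (γ := p / 2) (β := p / 2)
          (by positivity) (by positivity) (by gcongr) (by gcongr) (by linarith) (by linarith)
        rw [add_halves] at key
        rw [← ENNReal.ofReal_mul (by positivity)]
        exact ENNReal.ofReal_le_ofReal key
    _ = (∑' a : ℤ, ENNReal.ofReal ((1 + c * |(a : ℝ) + θ.1|) ^ (-(p / 2)))) *
        ∑' b : ℤ, ENNReal.ofReal ((1 + c * |(b : ℝ) + θ.2|) ^ (-(p / 2))) := by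
        rw [ENNReal.tsum_prod', ← ENNReal.tsum_mul_right]
        simp only [ENNReal.tsum_mul_left]
    _ ≤ J * J := mul_le_mul' (hJθ θ.1) (hJθ θ.2)

/-- Let `K₁, K₂ ⊆ ℝ²` be closed cones with `K₁ ∩ K₂ = {0}`, let `δ > 0`
and `α > 2(1 + 2/δ)`.  Then
`sup_{θ∈ℝ²} Σ_{t ∈ K₁ ∩ (ℤ²+θ)} (∫_{K₂} (1+|t−s|)^{−α} ds)^{δ/2} < ∞`,
the sum running over the points of the shifted integer lattice `ℤ²+θ` lying in `K₁`. -/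
theorem stmt11 (K₁ K₂ : Set (EuclideanSpace ℝ (Fin 2)))
    (h₁ : IsClosedCone K₁) (h₂ : IsClosedCone K₂) (hK : K₁ ∩ K₂ = {0})
    (δ : ℝ) (hδ : 0 < δ) (α : ℝ) (hα : 2 * (1 + 2 / δ) < α) :
    (⨆ θ : ℝ × ℝ, ∑' k : ℤ × ℤ,
        Set.indicator K₁
          (fun t => (∫⁻ s in K₂, ENNReal.ofReal ((1 + ‖t - s‖) ^ (-α))) ^ (δ / 2))
          ((WithLp.equiv 2 (Fin 2 → ℝ)).symm ![(k.1 : ℝ) + θ.1, (k.2 : ℝ) + θ.2]))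
      < ⊤ := by
  obtain ⟨c, hc, hc1, hsep⟩ := exists_mul_norm_prod_le_norm_sub h₁.1 h₂.1 h₁.2 h₂.2 hK
  -- split `α = (α - β) + β` with `β > 2` integrable over `ℝ²` and `(α - β) * (δ / 2) > 2`
  set β := (α + 2 - 2 * (2 / δ)) / 2 with hβdef
  have hβ : (Module.finrank ℝ (EuclideanSpace ℝ (Fin 2)) : ℝ) < β := by
    rw [finrank_euclideanSpace_fin]; push_cast; linarith [hβdef]
  have hp : 2 < (α - β) * (δ / 2) :=
    calc (2 : ℝ) = 2 * (2 / δ) * (δ / 2) := by field_simp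
      _ < (α - β) * (δ / 2) := by gcongr; linarith [hβdef]
  obtain ⟨C, hC, hCt⟩ := exists_setLIntegral_one_add_norm_sub_rpow_neg_le volume K₂ (α := α) hc hc1
    hβ (by linarith [hβdef, (by positivity : (0 : ℝ) < 2 / δ)])
  obtain ⟨J, hJ, hJθ⟩ := exists_tsum_one_add_mul_norm_int_prod_add_rpow_neg_le hc hp
  have hterm : ∀ t ∈ K₁, (∫⁻ s in K₂, ENNReal.ofReal ((1 + ‖t - s‖) ^ (-α))) ^ (δ / 2) ≤
      C ^ (δ / 2) * ENNReal.ofReal ((1 + c * ‖t‖) ^ (-((α - β) * (δ / 2)))) := fun t ht =>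
    calc _ ≤ (C * ENNReal.ofReal ((1 + c * ‖t‖) ^ (-(α - β)))) ^ (δ / 2) := by
          gcongr; exact hCt t (hsep t ht)
      _ = _ := by
          rw [ENNReal.mul_rpow_of_nonneg _ _ (by positivity),
            ENNReal.ofReal_rpow_of_nonneg (by positivity) (by positivity),
            ← Real.rpow_mul (by positivity), neg_mul]
  refine (iSup_le fun θ => ?_).trans_lt (ENNReal.mul_lt_top
    (ENNReal.rpow_lt_top_of_nonneg (by positivity : (0 : ℝ) ≤ δ / 2) hC.ne) hJ)
  calc _ ≤ ∑' k : ℤ × ℤ, C ^ (δ / 2) * ENNReal.ofReal ((1 + c *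
        ‖(WithLp.equiv 2 (Fin 2 → ℝ)).symm ![(k.1 : ℝ) + θ.1, (k.2 : ℝ) + θ.2]‖) ^
          (-((α - β) * (δ / 2)))) :=
        ENNReal.tsum_le_tsum fun k => Set.indicator_le hterm _
    _ ≤ C ^ (δ / 2) * J := by rw [ENNReal.tsum_mul_left]; gcongr; exact hJθ θ
end

section
/- Let α > 4, A ≥ 0, and let φ : ℝ² → ℂ be a measurable function with |φ(t)| ≤ A(1+|t|)^{−α/2} for almost every t ∈ ℝ². Then for every h ∈ ℝ², | ∫_{ℝ²} φ(−h−s) \overline{φ(h−s)} ds | ≤ (8πA²/(α−4)) (1+|h|)^{−α/2}. -/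
/-!
Write `w t = (1 + ‖t‖) ^ (-α/2)`. Since `‖s + h‖ + ‖s - h‖ ≥ 2‖h‖`, the smaller of the two
weights `w (s + h)`, `w (s - h)` is at most `w h`, so their product is at most
`w h * (w (s + h) + w (s - h))`. Integrating and using translation invariance bounds the integral
by `2 A² w h ∫ w`, and in polar coordinates
`∫_{ℝ²} w ≤ 2π ∫₀^∞ (1 + r) ^ (1 - α/2) dr = 4π/(α - 4)`.
-/

open MeasureTheory Metric Set Module
open scoped Real

theorem two_mul_norm_le_norm_add_add_norm_sub {E : Type*} [SeminormedAddCommGroup E]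
    [NormedSpace ℝ E] (s h : E) : 2 * ‖h‖ ≤ ‖s + h‖ + ‖s - h‖ := by
  calc 2 * ‖h‖ = ‖(s + h) - (s - h)‖ := by
        rw [show (s + h) - (s - h) = (2 : ℝ) • h by module, norm_smul, Real.norm_two]
    _ ≤ ‖s + h‖ + ‖s - h‖ := norm_sub_le _ _

theorem one_add_norm_rpow_neg_mul_le {E : Type*} [SeminormedAddCommGroup E] [NormedSpace ℝ E]
    {q : ℝ} (hq : 0 ≤ q) (s h : E) :
    (1 + ‖s + h‖) ^ (-q) * (1 + ‖s - h‖) ^ (-q)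
      ≤ (1 + ‖h‖) ^ (-q) * ((1 + ‖s + h‖) ^ (-q) + (1 + ‖s - h‖) ^ (-q)) := by
  have hanti : ∀ {t u : ℝ}, 0 ≤ t → t ≤ u → (1 + u) ^ (-q) ≤ (1 + t) ^ (-q) := fun ht htu =>
    Real.rpow_le_rpow_of_nonpos (by linarith) (by linarith) (by linarith)
  have hmin : min ((1 + ‖s + h‖) ^ (-q)) ((1 + ‖s - h‖) ^ (-q)) ≤ (1 + ‖h‖) ^ (-q) := by
    have htri := two_mul_norm_le_norm_add_add_norm_sub s h
    by_cases hle : ‖h‖ ≤ ‖s + h‖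
    · exact (min_le_left _ _).trans (hanti (norm_nonneg h) hle)
    · exact (min_le_right _ _).trans (hanti (norm_nonneg h) (by linarith))
  rw [← min_mul_max]
  exact mul_le_mul hmin (max_le_add_of_nonneg (by positivity) (by positivity))
    (by positivity) (by positivity)

theorem norm_integral_mul_conj_le {E 𝕜 : Type*} [NormedAddCommGroup E] [NormedSpace ℝ E]
    [MeasurableSpace E] [MeasurableAdd₂ E] [MeasurableNeg E] [RCLike 𝕜] {μ : Measure E}
    [SFinite μ] [μ.IsAddRightInvariant] {q A : ℝ} (hq : 0 ≤ q)
    (hw : Integrable (fun t : E => (1 + ‖t‖) ^ (-q)) μ) {φ : E → 𝕜}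
    (hφ : ∀ᵐ t ∂μ, ‖φ t‖ ≤ A * (1 + ‖t‖) ^ (-q)) (h : E) :
    ‖∫ s, φ (-h - s) * (starRingEnd 𝕜) (φ (h - s)) ∂μ‖
      ≤ 2 * A ^ 2 * (∫ t, (1 + ‖t‖) ^ (-q) ∂μ) * (1 + ‖h‖) ^ (-q) := by
  have hφ_neg : ∀ᵐ s ∂μ, ‖φ (-h - s)‖ ≤ A * (1 + ‖s + h‖) ^ (-q) := by
    filter_upwards [(quasiMeasurePreserving_sub_left_of_right_invariant μ (-h)).ae hφ] with s hs
    rw [show -h - s = -(s + h) by abel] at hs ⊢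
    rwa [norm_neg] at hs
  have hφ_sub : ∀ᵐ s ∂μ, ‖φ (h - s)‖ ≤ A * (1 + ‖s - h‖) ^ (-q) := by
    filter_upwards [(quasiMeasurePreserving_sub_left_of_right_invariant μ h).ae hφ] with s hs
    rwa [norm_sub_rev] at hs
  have hdom : ∀ᵐ s ∂μ, ‖φ (-h - s) * (starRingEnd 𝕜) (φ (h - s))‖
      ≤ A ^ 2 * ((1 + ‖h‖) ^ (-q) * ((1 + ‖s + h‖) ^ (-q) + (1 + ‖s - h‖) ^ (-q))) := by
    filter_upwards [hφ_neg, hφ_sub] with s h₁ h₂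
    rw [norm_mul, RCLike.norm_conj]
    calc ‖φ (-h - s)‖ * ‖φ (h - s)‖
        ≤ A * (1 + ‖s + h‖) ^ (-q) * (A * (1 + ‖s - h‖) ^ (-q)) :=
          mul_le_mul h₁ h₂ (norm_nonneg _) ((norm_nonneg _).trans h₁)
      _ = A ^ 2 * ((1 + ‖s + h‖) ^ (-q) * (1 + ‖s - h‖) ^ (-q)) := by ring
      _ ≤ _ := mul_le_mul_of_nonneg_left (one_add_norm_rpow_neg_mul_le hq s h) (sq_nonneg A)
  have hw_add := hw.comp_add_right h
  have hw_sub := hw.comp_sub_right h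
  calc _ ≤ ∫ s, A ^ 2 * ((1 + ‖h‖) ^ (-q) * ((1 + ‖s + h‖) ^ (-q) + (1 + ‖s - h‖) ^ (-q))) ∂μ :=
        norm_integral_le_of_norm_le (((hw_add.add hw_sub).const_mul _).const_mul _) hdom
    _ = _ := by
        rw [integral_const_mul, integral_const_mul, integral_add hw_add hw_sub,
          integral_add_right_eq_self (fun t => (1 + ‖t‖) ^ (-q)),
          integral_sub_right_eq_self (fun t => (1 + ‖t‖) ^ (-q))]
        ring

theorem integrableOn_Ioi_zero_one_add_rpow_neg {p : ℝ} (hp : 1 < p) :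
    IntegrableOn (fun y : ℝ => (1 + y) ^ (-p)) (Ioi 0) := by
  rw [show Ioi (0 : ℝ) = (1 + ·) ⁻¹' Ioi 1 by simp]
  exact ((measurePreserving_add_left volume 1).integrableOn_comp_preimage
    (measurableEmbedding_addLeft 1)).2 (integrableOn_Ioi_rpow_of_lt (by linarith) one_pos)

theorem integral_Ioi_zero_one_add_rpow_neg {p : ℝ} (hp : 1 < p) :
    ∫ y in Ioi (0 : ℝ), (1 + y) ^ (-p) = (p - 1)⁻¹ := by
  rw [show Ioi (0 : ℝ) = (1 + ·) ⁻¹' Ioi 1 by simp,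
    (measurePreserving_add_left volume 1).setIntegral_preimage_emb (measurableEmbedding_addLeft 1)
    (fun t => t ^ (-p)), integral_Ioi_rpow_of_lt (by linarith) one_pos, Real.one_rpow,
    show -p + 1 = -(p - 1) by ring, div_neg, neg_div, neg_neg, one_div]

theorem integral_one_add_norm_rpow_neg_le {E : Type*} [NormedAddCommGroup E] [NormedSpace ℝ E]
    [FiniteDimensional ℝ E] [Nontrivial E] [MeasurableSpace E] [BorelSpace E]
    (μ : Measure E) [μ.IsAddHaarMeasure] {q : ℝ} (hq : (finrank ℝ E : ℝ) < q) :
    ∫ x, (1 + ‖x‖) ^ (-q) ∂μ ≤ finrank ℝ E * μ.real (ball 0 1) / (q - finrank ℝ E) := by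
  obtain ⟨k, hk⟩ : ∃ k, finrank ℝ E = k + 1 := Nat.exists_eq_add_one.2 finrank_pos
  rw [integral_fun_norm_addHaar μ (fun r => (1 + r) ^ (-q)), hk, Nat.add_sub_cancel,
    nsmul_eq_mul, smul_eq_mul]
  rw [hk] at hq
  push_cast at hq ⊢
  have hp : 1 < q - k := by linarith
  have hpt : ∀ y ∈ Ioi (0 : ℝ), y ^ k • (1 + y) ^ (-q) ≤ (1 + y) ^ (-(q - k)) := fun y hy => by
    have hy : 0 < y := hy
    rw [smul_eq_mul, show -(q - k) = k + -q by ring, Real.rpow_add (by linarith),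
      Real.rpow_natCast]
    gcongr
    linarith
  have hradial : ∫ y in Ioi (0 : ℝ), y ^ k • (1 + y) ^ (-q) ≤ (q - k - 1)⁻¹ :=
    integral_Ioi_zero_one_add_rpow_neg hp ▸ integral_mono_of_nonneg
      (ae_restrict_of_forall_mem measurableSet_Ioi fun y (hy : 0 < y) => by positivity)
      (integrableOn_Ioi_zero_one_add_rpow_neg hp)
      (ae_restrict_of_forall_mem measurableSet_Ioi hpt)
  have hball : 0 ≤ μ.real (ball 0 1) := measureReal_nonneg
  calc (k + 1) * (μ.real (ball 0 1) * ∫ y in Ioi (0 : ℝ), y ^ k • (1 + y) ^ (-q))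
      ≤ (k + 1) * (μ.real (ball 0 1) * (q - k - 1)⁻¹) := by gcongr
    _ = (k + 1) * μ.real (ball 0 1) / (q - (k + 1)) := by ring

theorem stmt14_general (α : ℝ) (hα : 4 < α) (A : ℝ)
    (φ : EuclideanSpace ℝ (Fin 2) → ℂ)
    (hbound : ∀ᵐ t : EuclideanSpace ℝ (Fin 2), ‖φ t‖ ≤ A * (1 + ‖t‖) ^ (-(α / 2)))
    (h : EuclideanSpace ℝ (Fin 2)) :
    ‖∫ s : EuclideanSpace ℝ (Fin 2), φ (-h - s) * (starRingEnd ℂ) (φ (h - s))‖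
      ≤ 8 * π * A ^ 2 / (α - 4) * (1 + ‖h‖) ^ (-(α / 2)) := by
  have hq : (finrank ℝ (EuclideanSpace ℝ (Fin 2)) : ℝ) < α / 2 := by
    rw [finrank_euclideanSpace_fin]; push_cast; linarith
  have hball : volume.real (ball (0 : EuclideanSpace ℝ (Fin 2)) 1) = π := by
    simp [measureReal_def, Real.pi_nonneg]
  calc _ ≤ 2 * A ^ 2 * (∫ t, (1 + ‖t‖) ^ (-(α / 2))) * (1 + ‖h‖) ^ (-(α / 2)) :=
        norm_integral_mul_conj_le (by linarith) (integrable_one_add_norm hq) hbound h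
    _ ≤ 2 * A ^ 2 * (2 * π / (α / 2 - 2)) * (1 + ‖h‖) ^ (-(α / 2)) := by
        gcongr
        simpa [finrank_euclideanSpace_fin, hball] using integral_one_add_norm_rpow_neg_le volume hq
    _ = _ := by
        rw [show α / 2 - 2 = (α - 4) / 2 by ring]
        field_simp
        ring

/-- Let `α > 4`, `A ≥ 0`, and let `φ : ℝ² → ℂ` be measurable with
`|φ(t)| ≤ A(1+|t|)^{−α/2}` for almost every `t ∈ ℝ²`.  Then for every `h ∈ ℝ²`,
`|∫_{ℝ²} φ(−h−s) conj(φ(h−s)) ds| ≤ (8πA²/(α−4)) (1+|h|)^{−α/2}`. -/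
theorem stmt14 (α : ℝ) (hα : 4 < α) (A : ℝ) (hA : 0 ≤ A)
    (φ : EuclideanSpace ℝ (Fin 2) → ℂ) (hφ : Measurable φ)
    (hbound : ∀ᵐ t : EuclideanSpace ℝ (Fin 2), ‖φ t‖ ≤ A * (1 + ‖t‖) ^ (-(α / 2)))
    (h : EuclideanSpace ℝ (Fin 2)) :
    ‖∫ s : EuclideanSpace ℝ (Fin 2), φ (-h - s) * (starRingEnd ℂ) (φ (h - s))‖
      ≤ 8 * π * A ^ 2 / (α - 4) * (1 + ‖h‖) ^ (-(α / 2)) :=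
  stmt14_general α hα A φ hbound h
end
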